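/- arXiv:1702.08144 — 7 statements merged into one kernel-verified Lean document; each statement's English description precedes it below -/
import Mathlib

section
/- The rank of a weakly acyclic automaton is equal to the number of its sink states. -/
/-- The extension of the transition function to words. -/
def deltaStar {Q A : Type*} (δ : Q → A → Q) (q : Q) (w : List A) : Q := w.foldl δ q

/-- A simple cycle: pairwise distinct states `q 0, …, q (k-1)` together with letters
mapping each state of the cycle to the next one (cyclically). -/
def IsSimpleCycle {Q A : Type*} (δ : Q → A → Q) (k : ℕ) (q : Fin k → Q) : Prop :=
  0 < k ∧ Function.Injective q ∧
    ∃ x : Fin k → A, ∀ i : Fin k, δ (q i) (x i) = q ⟨(i.val + 1) % k, Nat.mod_lt _ i.pos⟩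

/-- An automaton is weakly acyclic if all its simple cycles are self-loops. -/
def WeaklyAcyclic {Q A : Type*} (δ : Q → A → Q) : Prop :=
  ∀ (k : ℕ) (q : Fin k → Q), IsSimpleCycle δ k q → k = 1

/-- A sink state is fixed by every letter. -/
def IsSink {Q A : Type*} (δ : Q → A → Q) (q : Q) : Prop := ∀ x : A, δ q x = q

/-- The word `w` synchronizes the set `S` of states. -/
def SyncsSet {Q A : Type*} (δ : Q → A → Q) (S : Finset Q) (w : List A) : Prop :=
  ∃ q : Q, ∀ s ∈ S, deltaStar δ s w = q

/-- A set of states is synchronizing if some word synchronizes it. -/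
def IsSyncSet {Q A : Type*} (δ : Q → A → Q) (S : Finset Q) : Prop :=
  ∃ w : List A, SyncsSet δ S w

/-- The rank of a word with respect to an automaton: the size of the image of the
state set under the word. -/
def wordRank {Q A : Type*} [Fintype Q] [DecidableEq Q] (δ : Q → A → Q) (w : List A) : ℕ :=
  (Finset.univ.image fun q => deltaStar δ q w).card

/-- The rank of an automaton: the minimum rank of a word with respect to it. -/
noncomputable def autRank {Q A : Type*} [Fintype Q] [DecidableEq Q] (δ : Q → A → Q) : ℕ :=
  sInf {r | ∃ w : List A, wordRank δ w = r}

/-- The rank of a word with respect to a subset of states. -/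
def subsetWordRank {Q A : Type*} [DecidableEq Q] (δ : Q → A → Q) (S : Finset Q)
    (w : List A) : ℕ :=
  (S.image fun q => deltaStar δ q w).card

/-- The rank of a subset of states: the minimum rank of a word with respect to it. -/
noncomputable def subsetRank {Q A : Type*} [DecidableEq Q] (δ : Q → A → Q) (S : Finset Q) : ℕ :=
  sInf {r | ∃ w : List A, subsetWordRank δ S w = r}

/-- `w^j`: the word obtained by `j` concatenations of `w`. -/
def wordPow {A : Type*} (w : List A) (j : ℕ) : List A := (List.replicate j w).flatten

/-!
Call a transition `p → δ p x` with `δ p x ≠ p` a strict step. A closed walk of strict steps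
would, after cutting it at a repeated state as often as possible, yield a simple cycle of length
at least two; so in a weakly acyclic automaton strict steps generate a well-founded order, and
following strict steps from any state ends in a sink. Concatenating such words for all states
gives a word mapping every state to a sink. Since every word fixes every sink, this word has
minimal rank, equal to the number of sinks.
-/

section

variable {Q A : Type*}

def StrictStep (δ : Q → A → Q) (p q : Q) : Prop := p ≠ q ∧ ∃ x, δ p x = q

lemma deltaStar_append (δ : Q → A → Q) (q : Q) (u v : List A) :
    deltaStar δ q (u ++ v) = deltaStar δ (deltaStar δ q u) v :=
  List.foldl_append ..

lemma IsSink.deltaStar_eq {δ : Q → A → Q} {q : Q} (hq : IsSink δ q) (w : List A) :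
    deltaStar δ q w = q := by
  induction w using List.reverseRecOn with
  | nil => rfl
  | append_singleton w x ih => rw [deltaStar_append, ih]; exact hq x

lemma isSimpleCycle_of_nodup_of_isChain {δ : Q → A → Q} {l : List Q} (hl : l ≠ [])
    (hnd : l.Nodup)
    (hc : (l.getLast hl :: l).IsChain fun p q => ∃ x, δ p x = q) :
    IsSimpleCycle δ l.length (fun i => l[i]) := by
  refine ⟨List.length_pos_iff.2 hl, List.nodup_iff_injective_get.1 hnd, ?_⟩
  suffices ∀ i : Fin l.length,
      ∃ x, δ l[i] x = l[(i.val + 1) % l.length]'(Nat.mod_lt _ i.pos) by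
    choose x hx using this
    exact ⟨x, hx⟩
  intro i
  rcases Nat.lt_or_ge (i.val + 1) l.length with hi | hi
  · simp only [Nat.mod_eq_of_lt hi]
    exact hc.getElem (i + 1) (by simpa using hi)
  · have hlast : i.val = l.length - 1 := by omega
    have hmod : (i.val + 1) % l.length = 0 := by
      rw [hlast, Nat.sub_add_cancel i.pos, Nat.mod_self]
    simp only [hmod]
    simpa [hlast, List.getLast_eq_getElem] using hc.getElem 0 (by simpa using i.pos)

lemma WeaklyAcyclic.not_isChain_strictStep_cycle {δ : Q → A → Q} (h : WeaklyAcyclic δ)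
    (l : List Q) (hl : l ≠ []) : ¬ (l.getLast hl :: l).IsChain (StrictStep δ) := by
  induction hlen : l.length using Nat.strong_induction_on generalizing l with
  | _ n ih =>
  intro hc
  by_cases hnd : l.Nodup
  · have hcyc := isSimpleCycle_of_nodup_of_isChain hl hnd (hc.imp fun _ _ hpq => hpq.2)
    obtain ⟨a, rfl⟩ : ∃ a, l = [a] := List.length_eq_one_iff.1 (h _ _ hcyc)
    exact (List.isChain_pair.1 hc).1 rfl
  · obtain ⟨a, hdup⟩ : ∃ a, [a, a].Sublist l := by
      simpa [List.nodup_iff_sublist] using hnd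
    -- the two occurrences of `a` cut out the shorter closed walk `a :: m ++ [a]`
    obtain ⟨p, m, s, rfl⟩ : ∃ p m s, l = p ++ a :: (m ++ a :: s) := by
      obtain ⟨r₁, r₂, rfl, ha₁, ha₂⟩ := List.cons_sublist_iff.1 hdup
      obtain ⟨p, t, rfl⟩ := List.append_of_mem ha₁
      obtain ⟨u, s, rfl⟩ := List.append_of_mem (List.singleton_sublist.1 ha₂)
      exact ⟨p, t ++ u, s, by simp⟩
    have hshorter : (m ++ [a]).length < n := by
      simp only [← hlen, List.length_append, List.length_cons, List.length_nil]
      omega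
    refine ih _ hshorter (m ++ [a]) (by simp) rfl ?_
    exact hc.infix (List.infix_cons (by simpa using List.infix_append p (a :: (m ++ [a])) s))

lemma WeaklyAcyclic.wellFounded_strictStep [Finite Q] {δ : Q → A → Q} (h : WeaklyAcyclic δ) :
    WellFounded (flip (StrictStep δ)) := by
  have : Std.Irrefl (Relation.TransGen (flip (StrictStep δ))) := by
    refine ⟨fun a ha => ?_⟩
    obtain ⟨b, hab, hba⟩ := Relation.TransGen.head'_iff.1 (Relation.transGen_swap.1 ha)
    obtain ⟨l, hc, hlast⟩ := List.exists_isChain_cons_of_relationReflTransGen hba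
    refine h.not_isChain_strictStep_cycle (b :: l) (List.cons_ne_nil _ _) ?_
    rw [hlast]
    exact hc.cons_cons hab
  exact (Finite.wellFounded_of_trans_of_irrefl _).mono fun _ _ => Relation.TransGen.single

lemma WeaklyAcyclic.exists_isSink_deltaStar [Finite Q] {δ : Q → A → Q} (h : WeaklyAcyclic δ)
    (q : Q) : ∃ w, IsSink δ (deltaStar δ q w) := by
  induction q using h.wellFounded_strictStep.induction with
  | _ q ih =>
  by_cases hq : IsSink δ q
  · exact ⟨[], hq⟩
  · obtain ⟨x, hx⟩ := not_forall.1 hq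
    obtain ⟨w, hw⟩ := ih (δ q x) ⟨Ne.symm hx, x, rfl⟩
    exact ⟨x :: w, hw⟩

lemma WeaklyAcyclic.exists_forall_isSink_deltaStar [Finite Q] {δ : Q → A → Q}
    (h : WeaklyAcyclic δ) : ∃ w, ∀ q, IsSink δ (deltaStar δ q w) := by
  classical
  have hfin (S : Finset Q) : ∃ w, ∀ q ∈ S, IsSink δ (deltaStar δ q w) := by
    induction S using Finset.induction_on with
    | empty => exact ⟨[], by simp⟩
    | insert a S _ ih =>
      obtain ⟨w, hw⟩ := ih
      obtain ⟨w', hw'⟩ := h.exists_isSink_deltaStar (deltaStar δ a w)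
      refine ⟨w ++ w', fun q hq => ?_⟩
      rw [deltaStar_append]
      rcases Finset.mem_insert.1 hq with rfl | hq
      · exact hw'
      · rw [(hw q hq).deltaStar_eq]
        exact hw q hq
  have := Fintype.ofFinite Q
  simpa using hfin Finset.univ

lemma ncard_isSink_le_wordRank [Fintype Q] [DecidableEq Q] (δ : Q → A → Q) (w : List A) :
    {q | IsSink δ q}.ncard ≤ wordRank δ w := by
  rw [wordRank, ← Set.ncard_coe_finset]
  exact Set.ncard_le_ncard fun q hq => by simpa using ⟨q, (hq : IsSink δ q).deltaStar_eq w⟩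

lemma wordRank_le_ncard_isSink [Fintype Q] [DecidableEq Q] {δ : Q → A → Q} {w : List A}
    (hw : ∀ q, IsSink δ (deltaStar δ q w)) : wordRank δ w ≤ {q | IsSink δ q}.ncard := by
  rw [wordRank, ← Set.ncard_coe_finset]
  exact Set.ncard_le_ncard (by simpa [Set.subset_def] using hw)

lemma autRank_eq_of_forall_le [Fintype Q] [DecidableEq Q] {δ : Q → A → Q} {n : ℕ}
    (hle : ∀ w, n ≤ wordRank δ w) {w₀ : List A} (hw₀ : wordRank δ w₀ = n) :
    autRank δ = n :=
  le_antisymm (Nat.sInf_le ⟨w₀, hw₀⟩)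
    (le_csInf ⟨_, w₀, rfl⟩ (by rintro _ ⟨w, rfl⟩; exact hle w))

end

theorem stmt2_general {Q A : Type*} [Fintype Q] [DecidableEq Q] (δ : Q → A → Q)
    (h : WeaklyAcyclic δ) :
    autRank δ = {q : Q | IsSink δ q}.ncard := by
  obtain ⟨w, hw⟩ := h.exists_forall_isSink_deltaStar
  exact autRank_eq_of_forall_le (ncard_isSink_le_wordRank δ)
    (le_antisymm (wordRank_le_ncard_isSink hw) (ncard_isSink_le_wordRank δ w))

/-- The rank of a weakly acyclic automaton equals the number of its sink states. -/
theorem stmt2 {Q A : Type*} [Fintype Q] [DecidableEq Q] [Fintype A] (δ : Q → A → Q)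
    (h : WeaklyAcyclic δ) :
    autRank δ = {q : Q | IsSink δ q}.ncard :=
  stmt2_general δ h
end

section
/- For all integers r, n with 1 ≤ r ≤ n, there exists an n-state weakly acyclic automaton A over a one-letter alphabet {x} such that A has rank r, some word of length n − r has rank r with respect to A, and every word of rank r with respect to A has length at least n − r. (The automaton has states q_1, …, q_n with δ(q_i, x) = q_{i+1} for 1 ≤ i ≤ n − r and δ(q_i, x) = q_i for n − r + 1 ≤ i ≤ n.) -/
/-! The letter never decreases a state, so the largest state on a cycle is fixed and the cycle is
a self-loop. A word of length `ℓ` maps the states onto `{min ℓ (n - r), …, n - 1}`, a set of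
`n - min ℓ (n - r)` states, which is `r` exactly when `ℓ ≥ n - r`. -/

/-- State `i : Fin n` is the paper's `q_{i+1}`; the paper's automaton takes `m = n - r`. -/
def pathAutomaton {A : Type*} {m n : ℕ} (hm : m < n) (i : Fin n) (_ : A) : Fin n :=
  if h : i.val < m then ⟨i.val + 1, by omega⟩ else i

theorem autRank_eq_of_wordRank {Q A : Type*} [Fintype Q] [DecidableEq Q] {δ : Q → A → Q}
    {r : ℕ} {w : List A} (hw : wordRank δ w = r) (hle : ∀ v : List A, r ≤ wordRank δ v) :
    autRank δ = r :=
  le_antisymm (Nat.sInf_le ⟨w, hw⟩) (le_csInf ⟨r, w, hw⟩ fun _ ⟨v, hv⟩ => hv ▸ hle v)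

theorem Nat.eq_one_of_succ_mod_eq {i k : ℕ} (hi : i < k) (h : (i + 1) % k = i) : k = 1 := by
  rcases Nat.lt_or_ge (i + 1) k with hlt | hge
  · rw [Nat.mod_eq_of_lt hlt] at h
    omega
  · rw [show i + 1 = k by omega, Nat.mod_self] at h
    omega

theorem weaklyAcyclic_of_le_delta {Q A : Type*} [LinearOrder Q] {δ : Q → A → Q}
    (hδ : ∀ q a, q ≤ δ q a) : WeaklyAcyclic δ := by
  rintro k q ⟨hk, hinj, x, hx⟩
  obtain ⟨i, -, hmax⟩ := Finset.exists_max_image Finset.univ q ⟨⟨0, hk⟩, Finset.mem_univ _⟩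
  have hsucc : q ⟨(i.val + 1) % k, Nat.mod_lt _ i.pos⟩ = q i :=
    le_antisymm (hmax _ (Finset.mem_univ _)) (hx i ▸ hδ (q i) (x i))
  exact Nat.eq_one_of_succ_mod_eq i.isLt (congrArg Fin.val (hinj hsucc))

section pathAutomaton

variable {A : Type*} {m n : ℕ} (hm : m < n)

theorem val_pathAutomaton (i : Fin n) (a : A) :
    (pathAutomaton hm i a).val = if i.val < m then i.val + 1 else i.val := by
  unfold pathAutomaton
  split_ifs <;> rfl

theorem le_pathAutomaton (i : Fin n) (a : A) : i ≤ pathAutomaton hm i a := by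
  rw [Fin.le_def, val_pathAutomaton]
  split_ifs <;> omega

theorem val_deltaStar_pathAutomaton (w : List A) (i : Fin n) :
    (deltaStar (pathAutomaton hm) i w).val = max i.val (min (i.val + w.length) m) := by
  induction w generalizing i with
  | nil => simp only [deltaStar, List.foldl_nil, List.length_nil, Nat.add_zero]; omega
  | cons a w ih =>
    change (deltaStar (pathAutomaton hm) (pathAutomaton hm i a) w).val = _
    rw [ih, val_pathAutomaton, List.length_cons]
    split_ifs <;> omega

theorem image_deltaStar_pathAutomaton (w : List A) :
    Finset.univ.image (fun i => deltaStar (pathAutomaton hm) i w)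
      = Finset.Ici ⟨min w.length m, by omega⟩ := by
  ext j
  simp only [Finset.mem_image, Finset.mem_univ, true_and, Finset.mem_Ici, Fin.le_def]
  constructor
  · rintro ⟨i, rfl⟩
    rw [val_deltaStar_pathAutomaton]
    omega
  · intro hj
    by_cases hjm : j.val < m
    · refine ⟨⟨j.val - w.length, by omega⟩, Fin.ext ?_⟩
      simp only [val_deltaStar_pathAutomaton]
      omega
    · exact ⟨j, Fin.ext (by rw [val_deltaStar_pathAutomaton]; omega)⟩

theorem wordRank_pathAutomaton (w : List A) :
    wordRank (pathAutomaton hm) w = n - min w.length m := by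
  rw [wordRank, image_deltaStar_pathAutomaton, Fin.card_Ici]

end pathAutomaton

/-- For all `1 ≤ r ≤ n` there is an `n`-state weakly acyclic automaton over a one-letter
alphabet of rank `r` such that some word of length `n - r` has rank `r` and every word of
rank `r` has length at least `n - r`. -/
theorem stmt4 (r n : ℕ) (h1 : 1 ≤ r) (h2 : r ≤ n) :
    ∃ δ : Fin n → Unit → Fin n,
      WeaklyAcyclic δ ∧ autRank δ = r ∧
      (∃ w : List Unit, w.length = n - r ∧ wordRank δ w = r) ∧
      (∀ w : List Unit, wordRank δ w = r → n - r ≤ w.length) := by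
  have hm : n - r < n := by omega
  have hrank (w : List Unit) : wordRank (pathAutomaton hm) w = n - min w.length (n - r) :=
    wordRank_pathAutomaton hm w
  have hsync : wordRank (pathAutomaton hm) (List.replicate (n - r) ()) = r := by
    rw [hrank, List.length_replicate]
    omega
  refine ⟨pathAutomaton hm, weaklyAcyclic_of_le_delta (le_pathAutomaton hm),
    autRank_eq_of_wordRank hsync fun w => ?_, ⟨_, List.length_replicate, hsync⟩, fun w hw => ?_⟩
  · rw [hrank]
    omega
  · rw [hrank] at hw
    omega
end

section
/- Let S be a synchronizing set of states of size k in a weakly acyclic n-state automaton A = (Q, Σ, δ). Then there is a word of length at most k(2n − k − 1)/2 that synchronizes S. -/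
private lemma cyc_aux {Q A : Type*} {δ : Q → A → Q} (hwa : WeaklyAcyclic δ) :
    ∀ m : ℕ, 0 < m → ∀ f : ℕ → Q,
      (∀ v < m, ∃ x : A, δ (f v) x = f ((v + 1) % m)) → f 0 ≠ f (1 % m) → False := by
  intro m
  induction m using Nat.strong_induction_on with
  | _ m IH =>
  intro hm f hstep hne
  have hm2 : 2 ≤ m := by
    by_contra h
    have hm1 : m = 1 := by omega
    subst hm1
    simp at hne
  have h1m : 1 % m = 1 := Nat.mod_eq_of_lt (by omega)
  rw [h1m] at hne
  by_cases hinj : Set.InjOn f (Set.Iio m)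
  · have hcyc : IsSimpleCycle δ m (fun i : Fin m => f i.val) := by
      refine ⟨hm, ?_, ?_⟩
      · intro i j hij
        exact Fin.ext (hinj i.2 j.2 hij)
      · choose x hx using hstep
        exact ⟨fun i => x i.val i.2, fun i => hx i.val i.2⟩
    have := hwa m _ hcyc
    omega
  · rw [Set.InjOn] at hinj
    push_neg at hinj
    obtain ⟨i, hi, j, hj, hfe, hij⟩ := hinj
    simp only [Set.mem_Iio] at hi hj
    obtain ⟨i, j, hilt, hjm, hfe⟩ : ∃ i j, i < j ∧ j < m ∧ f i = f j := by
      rcases lt_or_gt_of_ne hij with h | h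
      · exact ⟨i, j, h, hj, hfe⟩
      · exact ⟨j, i, h, hi, hfe.symm⟩
    rcases Nat.eq_zero_or_pos i with hi0 | hipos
    · subst hi0
      have hj2 : 2 ≤ j := by
        by_contra h
        have : j = 1 := by omega
        subst this
        exact hne hfe
      refine IH j (by omega) (by omega) f ?_ ?_
      · intro v hv
        obtain ⟨x, hx⟩ := hstep v (by omega)
        refine ⟨x, ?_⟩
        rw [hx]
        rw [Nat.mod_eq_of_lt (show v + 1 < m by omega)]
        rcases Nat.lt_or_ge (v + 1) j with h | h
        · rw [Nat.mod_eq_of_lt h]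
        · have hvj : v + 1 = j := by omega
          rw [hvj, Nat.mod_self, ← hfe]
      · rw [Nat.mod_eq_of_lt (show 1 < j by omega)]
        exact hne
    · set d := j - i with hd
      have hd1 : 1 ≤ d := by omega
      set m' := m - d with hm'
      have h1 : i < m' := by omega
      have h2 : m' < m := by omega
      set g : ℕ → Q := fun t => if t ≤ i then f t else f (t + d) with hg
      refine IH m' h2 (by omega) g ?_ ?_
      · intro t ht
        rcases Nat.lt_trichotomy t i with h | h | h
        · obtain ⟨x, hx⟩ := hstep t (by omega)
          refine ⟨x, ?_⟩
          have e1 : g t = f t := if_pos (by omega)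
          have e2 : g ((t + 1) % m') = f (t + 1) := by
            rw [Nat.mod_eq_of_lt (by omega)]
            exact if_pos (by omega)
          rw [Nat.mod_eq_of_lt (show t + 1 < m by omega)] at hx
          rw [e1, e2, hx]
        · subst h
          obtain ⟨x, hx⟩ := hstep j (by omega)
          refine ⟨x, ?_⟩
          have e1 : g t = f j := by
            rw [hg]
            simp only [if_pos (le_refl t)]
            exact hfe
          rcases Nat.lt_or_ge (j + 1) m with hj1 | hj1
          · rw [Nat.mod_eq_of_lt hj1] at hx
            have e2 : g ((t + 1) % m') = f (j + 1) := by
              rw [Nat.mod_eq_of_lt (by omega), hg]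
              simp only [if_neg (show ¬ (t + 1 ≤ t) by omega)]
              congr 1
              omega
            rw [e1, e2, hx]
          · have hj1' : j + 1 = m := by omega
            rw [hj1', Nat.mod_self] at hx
            have e2 : g ((t + 1) % m') = f 0 := by
              rw [show t + 1 = m' by omega, Nat.mod_self, hg]
              simp only [if_pos (show (0:ℕ) ≤ t by omega)]
            rw [e1, e2, hx]
        · set v := t + d with hv
          have hvm : v < m := by omega
          obtain ⟨x, hx⟩ := hstep v hvm
          refine ⟨x, ?_⟩
          have e1 : g t = f v := by
            rw [hg]; simp only [if_neg (show ¬ (t ≤ i) by omega)]; rfl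
          rcases Nat.lt_or_ge (t + 1) m' with h' | h'
          · rw [Nat.mod_eq_of_lt (show v + 1 < m by omega)] at hx
            have e2 : g ((t + 1) % m') = f (v + 1) := by
              rw [Nat.mod_eq_of_lt h', hg]
              simp only [if_neg (show ¬ (t + 1 ≤ i) by omega)]
              congr 1
              omega
            rw [e1, e2, hx]
          · have ht1 : t + 1 = m' := by omega
            rw [show v + 1 = m by omega, Nat.mod_self] at hx
            have e2 : g ((t + 1) % m') = f 0 := by
              rw [ht1, Nat.mod_self, hg]
              simp only [if_pos (show (0:ℕ) ≤ i by omega)]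
            rw [e1, e2, hx]
      · have hm'2 : 2 ≤ m' := by omega
        have e0 : g 0 = f 0 := if_pos (by omega)
        have e1 : g (1 % m') = f 1 := by
          rw [Nat.mod_eq_of_lt (by omega)]
          exact if_pos (by omega)
        rw [e0, e1]
        exact hne

private def Reach {Q A : Type*} (δ : Q → A → Q) (a b : Q) : Prop :=
  ∃ (m : ℕ) (f : ℕ → Q), f 0 = a ∧ f m = b ∧ ∀ v < m, ∃ x : A, δ (f v) x = f (v + 1)

private lemma reach_refl {Q A : Type*} (δ : Q → A → Q) (a : Q) : Reach δ a a :=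
  ⟨0, fun _ => a, rfl, rfl, fun v hv => absurd hv (by omega)⟩

private lemma reach_step {Q A : Type*} (δ : Q → A → Q) (a : Q) (x : A) : Reach δ a (δ a x) := by
  refine ⟨1, fun t => if t = 0 then a else δ a x, by simp, by simp, ?_⟩
  intro v hv
  have : v = 0 := by omega
  subst this
  exact ⟨x, by simp⟩

private lemma reach_trans {Q A : Type*} {δ : Q → A → Q} {a b c : Q} :
    Reach δ a b → Reach δ b c → Reach δ a c := by
  rintro ⟨m1, f1, h10, h1m, h1s⟩ ⟨m2, f2, h20, h2m, h2s⟩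
  refine ⟨m1 + m2, fun t => if t < m1 then f1 t else f2 (t - m1), ?_, ?_, ?_⟩
  · rcases Nat.eq_zero_or_pos m1 with h | h
    · subst h
      simp only [lt_irrefl, if_neg (lt_irrefl 0), Nat.sub_zero]
      rw [h20, ← h1m, h10]
      simp
    · simp only [if_pos h]
      exact h10
  · simp only [if_neg (show ¬ (m1 + m2 < m1) by omega)]
    simpa using h2m
  · intro v hv
    rcases Nat.lt_trichotomy (v + 1) m1 with h | h | h
    · obtain ⟨x, hx⟩ := h1s v (by omega)
      exact ⟨x, by simp only [if_pos (show v < m1 by omega), if_pos h]; exact hx⟩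
    · obtain ⟨x, hx⟩ := h1s v (by omega)
      refine ⟨x, ?_⟩
      simp only [if_pos (show v < m1 by omega), if_neg (show ¬ (v + 1 < m1) by omega)]
      rw [show v + 1 - m1 = 0 by omega, h20, ← h1m, ← h]
      exact hx
    · obtain ⟨x, hx⟩ := h2s (v - m1) (by omega)
      refine ⟨x, ?_⟩
      simp only [if_neg (show ¬ (v < m1) by omega), if_neg (show ¬ (v + 1 < m1) by omega)]
      rw [show v + 1 - m1 = (v - m1) + 1 by omega]
      exact hx

private lemma reach_antisymm {Q A : Type*} {δ : Q → A → Q} (hwa : WeaklyAcyclic δ) {a b : Q} :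
    Reach δ a b → Reach δ b a → a = b := by
  classical
  intro hab hba
  by_contra hne
  obtain ⟨m1, f1, h10, h1m, h1s⟩ := hab
  obtain ⟨m2, f2, h20, h2m, h2s⟩ := hba
  have hm1 : 0 < m1 := by
    rcases Nat.eq_zero_or_pos m1 with h | h
    · subst h; exact absurd (by rw [← h10, h1m]) hne
    · exact h
  have hm2 : 0 < m2 := by
    rcases Nat.eq_zero_or_pos m2 with h | h
    · subst h; exact absurd (by rw [← h2m, h20]) hne
    · exact h
  set M := m1 + m2 with hM
  set F : ℕ → Q := fun t => if t < m1 then f1 t else f2 (t - m1) with hF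
  have hF0 : F 0 = a := by rw [hF]; simp only [if_pos hm1]; exact h10
  have hFM : F M = a := by
    rw [hF]; simp only [if_neg (show ¬ (M < m1) by omega)]
    rw [hM]; simpa using h2m
  have hFm1 : F m1 = b := by
    rw [hF]; simp only [if_neg (lt_irrefl m1), Nat.sub_self]; exact h20
  have hFstep : ∀ v < M, ∃ x : A, δ (F v) x = F (v + 1) := by
    intro v hv
    rcases Nat.lt_trichotomy (v + 1) m1 with h | h | h
    · obtain ⟨x, hx⟩ := h1s v (by omega)
      exact ⟨x, by rw [hF]; simp only [if_pos (by omega : v < m1), if_pos h]; exact hx⟩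
    · obtain ⟨x, hx⟩ := h1s v (by omega)
      refine ⟨x, ?_⟩
      rw [hF]
      simp only [if_pos (by omega : v < m1), if_neg (by omega : ¬ (v + 1 < m1))]
      rw [show v + 1 - m1 = 0 by omega, h20, ← h1m, ← h]
      exact hx
    · obtain ⟨x, hx⟩ := h2s (v - m1) (by omega)
      refine ⟨x, ?_⟩
      rw [hF]
      simp only [if_neg (by omega : ¬ (v < m1)), if_neg (by omega : ¬ (v + 1 < m1))]
      rw [show v + 1 - m1 = (v - m1) + 1 by omega]
      exact hx
  have hFcyc : ∀ v < M, ∃ x : A, δ (F v) x = F ((v + 1) % M) := by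
    intro v hv
    obtain ⟨x, hx⟩ := hFstep v hv
    rcases Nat.lt_or_ge (v + 1) M with h | h
    · exact ⟨x, by rwa [Nat.mod_eq_of_lt h]⟩
    · refine ⟨x, ?_⟩
      rw [show v + 1 = M by omega] at hx
      rw [show v + 1 = M by omega, Nat.mod_self, hF0, ← hFM]
      exact hx
  have hex : ∃ t, F t ≠ a := ⟨m1, by rw [hFm1]; exact fun h => hne h.symm⟩
  have htP : F (Nat.find hex) ≠ a := Nat.find_spec hex
  set t := Nat.find hex with ht
  have ht1 : 1 ≤ t := by
    rcases Nat.eq_zero_or_pos t with h | h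
    · rw [h] at htP; exact absurd hF0 htP
    · exact h
  have htm1 : t ≤ m1 := Nat.find_min' hex (by rw [hFm1]; exact fun h => hne h.symm)
  have htM : t < M := by omega
  have hts : F (t - 1) = a := by
    by_contra h
    exact Nat.find_min hex (show t - 1 < t by omega) h
  set s := t - 1 with hs
  have hsM : s < M := by omega
  set g : ℕ → Q := fun u => F ((s + u) % M) with hgdef
  have hMpos : 0 < M := by omega
  refine cyc_aux hwa M hMpos g ?_ ?_
  · intro u hu
    obtain ⟨x, hx⟩ := hFcyc ((s + u) % M) (Nat.mod_lt _ (by omega))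
    refine ⟨x, ?_⟩
    rw [hgdef]
    simp only
    rw [Nat.add_mod_mod s (u + 1) M, ← Nat.add_assoc, ← Nat.mod_add_mod (s + u) M 1]
    exact hx
  · have hM2 : 2 ≤ M := by omega
    have e0 : g 0 = a := by
      rw [hgdef]; simp only [Nat.add_zero]
      rw [Nat.mod_eq_of_lt hsM]; exact hts
    have e1 : g (1 % M) = F t := by
      rw [hgdef]
      simp only
      rw [Nat.mod_eq_of_lt (show 1 < M by omega), Nat.mod_eq_of_lt (show s + 1 < M by omega),
        show s + 1 = t by omega]
    rw [e0, e1]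
    exact fun h => htP h.symm

private lemma sum_distinct_ge : ∀ (kk : ℕ) (F : Finset ℕ), F.card = kk →
    ∑ i ∈ Finset.range kk, i ≤ ∑ v ∈ F, v := by
  intro kk
  induction kk with
  | zero => intro F h; simp
  | succ kk ih =>
    intro F hF
    have hne : F.Nonempty := Finset.card_pos.mp (by omega)
    set M := F.max' hne with hM
    have hMk : kk ≤ M := by
      have hsub : F ⊆ Finset.range (M + 1) := fun v hv =>
        Finset.mem_range.mpr (by have := Finset.le_max' F v hv; omega)
      have := Finset.card_le_card hsub
      rw [Finset.card_range] at this
      omega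
    have hsum : M + ∑ v ∈ F.erase M, v = ∑ v ∈ F, v := Finset.add_sum_erase F (fun v => v) (F.max'_mem hne)
    have hih := ih (F.erase M) (by rw [Finset.card_erase_of_mem (F.max'_mem hne)]; omega)
    rw [Finset.sum_range_succ]
    omega

private lemma step_ineq {Q A : Type*} [DecidableEq Q] (δ : Q → A → Q) (m : ℕ)
    (φ : Q → ℕ) (hφn : ∀ q, φ q ≤ m)
    (hmono : ∀ q y, φ q ≤ φ (δ q y))
    (hstrict : ∀ q y, δ q y ≠ q → φ q + 1 ≤ φ (δ q y))
    (T : Finset Q) (x : A) (q0 : Q) (hq0 : q0 ∈ T) (hmove : δ q0 x ≠ q0) :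
    (∑ q ∈ T, φ q) + 1 + m * (T.image (fun q => δ q x)).card
      ≤ (∑ t ∈ T.image (fun q => δ q x), φ t) + m * T.card := by
  classical
  set T' := T.image (fun q => δ q x) with hT'
  have hmaps : ∀ q ∈ T, δ q x ∈ T' := fun q hq => Finset.mem_image_of_mem _ hq
  have hsum : ∑ j ∈ T', ∑ q ∈ T.filter (fun q => δ q x = j), φ q = ∑ q ∈ T, φ q :=
    Finset.sum_fiberwise_of_maps_to hmaps φ
  have hcard : T.card = ∑ j ∈ T', (T.filter (fun q => δ q x = j)).card :=
    Finset.card_eq_sum_card_fiberwise hmaps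
  have hweak : ∀ j ∈ T', (∑ q ∈ T.filter (fun q => δ q x = j), φ q) + m
      ≤ φ j + m * (T.filter (fun q => δ q x = j)).card := by
    intro j hj
    set F := T.filter (fun q => δ q x = j) with hF
    have hFne : F.Nonempty := by
      obtain ⟨q, hq, hq'⟩ := Finset.mem_image.mp hj
      exact ⟨q, Finset.mem_filter.mpr ⟨hq, hq'⟩⟩
    obtain ⟨c, hc⟩ : ∃ c, F.card = c + 1 :=
      ⟨F.card - 1, by have := Finset.card_pos.mpr hFne; omega⟩
    have hb : ∀ q ∈ F, φ q ≤ φ j := by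
      intro q hq
      have h1 := (Finset.mem_filter.mp hq).2
      have h2 := hmono q x
      rw [h1] at h2
      exact h2
    have hsle : ∑ q ∈ F, φ q ≤ (c + 1) * φ j := by
      have := Finset.sum_le_card_nsmul F φ (φ j) hb
      rwa [hc, smul_eq_mul] at this
    have h1 : c * φ j ≤ c * m := Nat.mul_le_mul_left c (hφn j)
    rw [hc]
    calc (∑ q ∈ F, φ q) + m ≤ (c + 1) * φ j + m := Nat.add_le_add_right hsle m
      _ = (c * φ j + φ j) + m := by rw [Nat.succ_mul]
      _ ≤ (c * m + φ j) + m := Nat.add_le_add_right (Nat.add_le_add_right h1 _) m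
      _ = φ j + m * (c + 1) := by ring
  have hstrictj : (∑ q ∈ T.filter (fun q => δ q x = δ q0 x), φ q) + m
      < φ (δ q0 x) + m * (T.filter (fun q => δ q x = δ q0 x)).card := by
    set F := T.filter (fun q => δ q x = δ q0 x) with hF
    have hq0F : q0 ∈ F := Finset.mem_filter.mpr ⟨hq0, rfl⟩
    have hsplit : φ q0 + ∑ q ∈ F.erase q0, φ q = ∑ q ∈ F, φ q := Finset.add_sum_erase F φ hq0F
    obtain ⟨c, hcc⟩ : ∃ c, F.card = c + 1 :=
      ⟨F.card - 1, by have := Finset.card_pos.mpr ⟨q0, hq0F⟩; omega⟩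
    have hrest : ∑ q ∈ F.erase q0, φ q ≤ c * m := by
      have := Finset.sum_le_card_nsmul (F.erase q0) φ m (fun q _ => hφn q)
      rwa [Finset.card_erase_of_mem hq0F, hcc, Nat.add_sub_cancel, smul_eq_mul] at this
    have hq0j : φ q0 + 1 ≤ φ (δ q0 x) := hstrict q0 x hmove
    rw [hcc]
    calc (∑ q ∈ F, φ q) + m = φ q0 + (∑ q ∈ F.erase q0, φ q) + m := by rw [hsplit]
      _ ≤ φ q0 + c * m + m := Nat.add_le_add_right (Nat.add_le_add_left hrest _) m
      _ < φ (δ q0 x) + c * m + m :=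
          Nat.add_lt_add_right (Nat.add_lt_add_right (by omega) _) m
      _ = φ (δ q0 x) + m * (c + 1) := by ring
  have key := Finset.sum_lt_sum (s := T')
    (f := fun j => (∑ q ∈ T.filter (fun q => δ q x = j), φ q) + m)
    (g := fun j => φ j + m * (T.filter (fun q => δ q x = j)).card)
    hweak ⟨δ q0 x, hmaps q0 hq0, hstrictj⟩
  rw [Finset.sum_add_distrib, Finset.sum_add_distrib, hsum, Finset.sum_const, smul_eq_mul,
    ← Finset.mul_sum, ← hcard] at key
  have : T'.card * m = m * T'.card := Nat.mul_comm _ _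
  linarith [key]

/-- A synchronizing set of `k` states in an `n`-state weakly acyclic automaton is
synchronized by a word of length at most `k(2n - k - 1)/2`. -/
theorem stmt7 {Q A : Type*} [Fintype Q] [Fintype A] (δ : Q → A → Q) (n k : ℕ)
    (hn : Fintype.card Q = n) (S : Finset Q) (hk : S.card = k)
    (hwa : WeaklyAcyclic δ) (hs : IsSyncSet δ S) :
    ∃ w : List A, SyncsSet δ S w ∧ w.length ≤ k * (2 * n - k - 1) / 2 := by
  classical
  obtain ⟨w0, hw0⟩ := hs
  rcases S.eq_empty_or_nonempty with hS | hSne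
  · obtain ⟨q, _⟩ := hw0
    exact ⟨[], ⟨q, by simp [hS]⟩, by simp⟩
  have hn1 : 1 ≤ n := by
    rw [← hn]
    exact Fintype.card_pos_iff.mpr ⟨hSne.choose⟩
  have hk1 : 1 ≤ k := by rw [← hk]; exact Finset.card_pos.mpr hSne
  have hkn : k ≤ n := by rw [← hn, ← hk]; exact Finset.card_le_univ S
  -- the partial order and its linear extension
  letI : IsPartialOrder Q (Reach δ) :=
    { refl := reach_refl δ
      trans := fun _ _ _ => reach_trans
      antisymm := fun _ _ => reach_antisymm hwa }
  obtain ⟨sle, hlin, hrs⟩ := extend_partialOrder (Reach δ)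
  haveI : IsLinearOrder Q sle := hlin
  -- the potential function on states
  set φ : Q → ℕ := fun q => (Finset.univ.filter (fun p => sle p q ∧ p ≠ q)).card with hφ
  have φstrict : ∀ a b : Q, sle a b → a ≠ b → φ a + 1 ≤ φ b := by
    intro a b hab hneq
    have hsub : Finset.univ.filter (fun p => sle p a ∧ p ≠ a)
        ⊂ Finset.univ.filter (fun p => sle p b ∧ p ≠ b) := by
      rw [Finset.ssubset_def]
      constructor
      · intro p hp
        simp only [Finset.mem_filter, Finset.mem_univ, true_and] at hp ⊢
        refine ⟨IsTrans.trans _ _ _ hp.1 hab, ?_⟩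
        rintro rfl
        exact hneq (Std.Antisymm.antisymm _ _ hab hp.1)
      · intro hsub'
        have ha : a ∈ Finset.univ.filter (fun p => sle p b ∧ p ≠ b) := by
          simp only [Finset.mem_filter, Finset.mem_univ, true_and]
          exact ⟨hab, hneq⟩
        have := hsub' ha
        simp only [Finset.mem_filter, Finset.mem_univ, true_and] at this
        exact this.2 rfl
    have := Finset.card_lt_card hsub
    simp only [hφ]
    omega
  have φinj : Function.Injective φ := by
    intro a b hab
    by_contra hne
    rcases Std.Total.total (r := sle) a b with h | h
    · have := φstrict a b h hne
      omega
    · have := φstrict b a h (Ne.symm hne)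
      omega
  have φlt : ∀ q : Q, φ q + 1 ≤ n := by
    intro q
    have hss : Finset.univ.filter (fun p => sle p q ∧ p ≠ q) ⊆ Finset.univ.erase q := by
      intro p hp
      simp only [Finset.mem_filter, Finset.mem_univ, true_and] at hp
      exact Finset.mem_erase.mpr ⟨hp.2, Finset.mem_univ p⟩
    have h2 := Finset.card_le_card hss
    rw [Finset.card_erase_of_mem (Finset.mem_univ q), Finset.card_univ, hn] at h2
    simp only [hφ]
    omega
  have hstrictφ : ∀ (q : Q) (y : A), δ q y ≠ q → φ q + 1 ≤ φ (δ q y) := by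
    intro q y h
    exact φstrict q (δ q y) (hrs _ _ (reach_step δ q y)) (Ne.symm h)
  have hmonoφ : ∀ (q : Q) (y : A), φ q ≤ φ (δ q y) := by
    intro q y
    by_cases h : δ q y = q
    · rw [h]
    · have := hstrictφ q y h
      omega
  -- a minimal synchronizing word
  have hex : ∃ L, ∃ w : List A, w.length = L ∧ SyncsSet δ S w := ⟨w0.length, w0, rfl, hw0⟩
  set L := Nat.find hex with hL
  obtain ⟨w, hwlen, hwS⟩ := Nat.find_spec hex
  rw [← hL] at hwlen
  have hmin : ∀ w' : List A, SyncsSet δ S w' → L ≤ w'.length := by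
    intro w' hw'
    by_contra h
    exact Nat.find_min hex (show w'.length < L by omega) ⟨w', rfl, hw'⟩
  set m := n - 1 with hm
  set T : ℕ → Finset Q := fun i => S.image (fun q => deltaStar δ q (w.take i)) with hT
  have hTcard : ∀ i, (T i).card ≤ k := fun i => hk ▸ Finset.card_image_le
  have htake : ∀ i (h : i < w.length), w.take (i + 1) = w.take i ++ [w.get ⟨i, h⟩] := by
    intro i h
    rw [List.take_succ]
    congr 1
    rw [List.getElem?_eq_getElem h]
    rfl
  have hds : ∀ (q : Q) (l : List A) (x : A), deltaStar δ q (l ++ [x]) = δ (deltaStar δ q l) x := by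
    intro q l x
    simp [deltaStar, List.foldl_append]
  have happ : ∀ (q : Q) (l1 l2 : List A),
      deltaStar δ q (l1 ++ l2) = deltaStar δ (deltaStar δ q l1) l2 := by
    intro q l1 l2
    simp [deltaStar, List.foldl_append]
  have hTsucc : ∀ i (h : i < w.length), T (i + 1) = (T i).image (fun q => δ q (w.get ⟨i, h⟩)) := by
    intro i h
    rw [hT]
    simp only
    rw [Finset.image_image]
    apply Finset.image_congr
    intro q _
    simp only [Function.comp_apply]
    rw [htake i h, hds]
  have hmove : ∀ i (h : i < w.length), ∃ q0 ∈ T i, δ q0 (w.get ⟨i, h⟩) ≠ q0 := by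
    intro i h
    by_contra hcon
    push_neg at hcon
    obtain ⟨qf, hqf⟩ := hwS
    have hsync : SyncsSet δ S (w.take i ++ w.drop (i + 1)) := by
      refine ⟨qf, fun s hsin => ?_⟩
      have hmem : deltaStar δ s (w.take i) ∈ T i := by
        rw [hT]
        exact Finset.mem_image_of_mem _ hsin
      have hfix := hcon _ hmem
      have hw' : deltaStar δ s (w.take i ++ w.drop (i + 1)) = deltaStar δ s w := by
        conv_rhs => rw [← List.take_append_drop (i + 1) w]
        rw [htake i h, happ, happ, hds, hfix]
      rw [hw', hqf s hsin]
    have hlen := hmin _ hsync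
    rw [List.length_append, List.length_take, List.length_drop] at hlen
    omega
  set Φ : ℕ → ℕ := fun i => (∑ q ∈ T i, φ q) + m * (k - (T i).card) with hΦ
  have hchain : ∀ i ≤ L, Φ 0 + i ≤ Φ i := by
    intro i hi
    induction i with
    | zero => omega
    | succ i ih =>
      have hiw : i < w.length := by omega
      have h1 := ih (by omega)
      obtain ⟨q0, hq0, hq0m⟩ := hmove i hiw
      have hstep := step_ineq δ m φ (fun q => by have := φlt q; omega) hmonoφ hstrictφ
        (T i) (w.get ⟨i, hiw⟩) q0 hq0 hq0m
      rw [← hTsucc i hiw] at hstep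
      have hc1 : (T (i + 1)).card ≤ (T i).card := by
        rw [hTsucc i hiw]
        exact Finset.card_image_le
      have hc2 : (T i).card ≤ k := hTcard i
      have hΦstep : Φ i + 1 ≤ Φ (i + 1) := by
        rw [hΦ]
        simp only
        have e1 : k - (T (i + 1)).card = (k - (T i).card) + ((T i).card - (T (i + 1)).card) := by
          omega
        have e2 : (T i).card = (T (i + 1)).card + ((T i).card - (T (i + 1)).card) := by omega
        rw [e1, Nat.mul_add]
        rw [e2, Nat.mul_add] at hstep
        linarith [hstep]
      omega
  -- endpoints
  have hT0 : T 0 = S := by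
    rw [hT]
    simp [deltaStar]
  obtain ⟨qf, hqf⟩ := hwS
  have hwtake : w.take L = w := by rw [← hwlen]; exact List.take_length
  have hTL : T L = {qf} := by
    apply Finset.Subset.antisymm
    · intro p hp
      rw [hT] at hp
      simp only at hp
      obtain ⟨s, hs, hps⟩ := Finset.mem_image.mp hp
      rw [Finset.mem_singleton, ← hps, hwtake]
      exact hqf s hs
    · intro p hp
      rw [Finset.mem_singleton] at hp
      subst hp
      obtain ⟨s, hs⟩ := hSne
      rw [hT]
      exact Finset.mem_image.mpr ⟨s, hs, by rw [hwtake]; exact hqf s hs⟩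
  have hΦ0 : Φ 0 = ∑ q ∈ S, φ q := by
    rw [hΦ]
    simp only [hT0, hk, Nat.sub_self, Nat.mul_zero, Nat.add_zero]
  have hΦL : Φ L = φ qf + m * (k - 1) := by
    rw [hΦ]
    simp only [hTL, Finset.sum_singleton, Finset.card_singleton]
  have hfinal := hchain L le_rfl
  rw [hΦ0, hΦL] at hfinal
  -- lower bound on the initial potential
  have hlow : ∑ i ∈ Finset.range k, i ≤ ∑ q ∈ S, φ q := by
    have h1 : ∑ v ∈ S.image φ, v = ∑ q ∈ S, φ q :=
      Finset.sum_image (fun a _ b _ h => φinj h)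
    have h2 := sum_distinct_ge k (S.image φ)
      (by rw [Finset.card_image_of_injective S φinj, hk])
    omega
  -- final arithmetic
  have hqfm : φ qf ≤ m := by have := φlt qf; omega
  have hmk : φ qf + m * (k - 1) ≤ m * k := by
    have : m * (k - 1) + m = m * k := by
      rw [← Nat.mul_succ]
      congr 1
      omega
    omega
  have hgauss : (∑ i ∈ Finset.range k, i) * 2 = k * (k - 1) := Finset.sum_range_id_mul_two k
  have hprod : k * (2 * n - k - 1) + k * (k - 1) = 2 * (m * k) := by
    have e : (2 * n - k - 1) + (k - 1) = 2 * m := by omega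
    calc k * (2 * n - k - 1) + k * (k - 1) = k * ((2 * n - k - 1) + (k - 1)) := by
          rw [Nat.mul_add]
      _ = k * (2 * m) := by rw [e]
      _ = 2 * (m * k) := by ring
  refine ⟨w, ⟨qf, hqf⟩, ?_⟩
  rw [hwlen, Nat.le_div_iff_mul_le (by norm_num : 0 < 2)]
  linarith [hfinal, hlow, hmk, hgauss, hprod]
end

section
/- For all integers n, k with 2 ≤ k ≤ n − 1 and n ≥ 3, the n-state weakly acyclic automaton with states Q = {−1, 0, 1, …, n−2} over the alphabet Σ = {a_1, …, a_{n−2}}, where δ(j, a_i) = j if j > i, δ(j, a_i) = j − 1 if j = i, δ(j, a_i) = −1 if 0 < j < i, and δ(j, a_i) = j if j ∈ {−1, 0}, together with the subset S = {0, n−2, n−3, …, n−k}, satisfies: S is synchronizing and the shortest word synchronizing S has length (k − 1)(2n − k − 2)/2. -/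
/-! ### Auxiliary machinery -/

set_option linter.unusedSectionVars false

lemma wa_sum_image_ge {α β : Type*} [DecidableEq α] [DecidableEq β] (T : Finset α) (f : α → β)
    (g : β → ℕ) (h0 : ∀ q ∈ T, ∀ q' ∈ T, q ≠ q' → f q = f q' → g (f q) = 0) :
    ∑ q ∈ T, g (f q) ≤ ∑ b ∈ T.image f, g b := by
  induction T using Finset.induction_on with
  | empty => simp
  | @insert a s ha ih =>
    rw [Finset.sum_insert ha, Finset.image_insert]
    by_cases hm : f a ∈ s.image f
    · obtain ⟨q, hq, hfq⟩ := Finset.mem_image.mp hm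
      have hz : g (f a) = 0 :=
        h0 a (Finset.mem_insert_self a s) q (Finset.mem_insert_of_mem hq)
          (fun h => ha (h ▸ hq)) hfq.symm
      rw [Finset.insert_eq_self.mpr hm, hz, zero_add]
      exact ih fun q hq q' hq' => h0 q (Finset.mem_insert_of_mem hq) q'
        (Finset.mem_insert_of_mem hq')
    · rw [Finset.sum_insert hm]
      exact Nat.add_le_add_left (ih fun q hq q' hq' => h0 q (Finset.mem_insert_of_mem hq) q'
        (Finset.mem_insert_of_mem hq')) _

/-- the letter `a_{i+1}` (index `i`), defined totally. -/
def wLt (n : ℕ) (hn : 3 ≤ n) (i : ℕ) : Fin (n - 2) := ⟨i % (n - 2), Nat.mod_lt _ (by omega)⟩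

lemma wLt_val (n : ℕ) (hn : 3 ≤ n) (i : ℕ) (h : i < n - 2) : (wLt n hn i).val = i :=
  Nat.mod_eq_of_lt h

/-- block of letters with indices `m-1, …, 0`. -/
def wBlk (n : ℕ) (hn : 3 ≤ n) (m : ℕ) : List (Fin (n - 2)) :=
  (List.range m).reverse.map (wLt n hn)

lemma wBlk_succ (n : ℕ) (hn : 3 ≤ n) (m : ℕ) :
    wBlk n hn (m+1) = wLt n hn m :: wBlk n hn m := by
  simp [wBlk, List.range_succ]

lemma wBlk_len (n : ℕ) (hn : 3 ≤ n) (m : ℕ) : (wBlk n hn m).length = m := by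
  simp [wBlk]

/-- concatenation of the blocks for `m = a, a+1, …, a+t-1`. -/
def wPart (n : ℕ) (hn : 3 ≤ n) (a t : ℕ) : List (Fin (n - 2)) :=
  ((List.range t).map fun i => wBlk n hn (a + i)).flatten

lemma wPart_succ (n : ℕ) (hn : 3 ≤ n) (a t : ℕ) :
    wPart n hn a (t+1) = wPart n hn a t ++ wBlk n hn (a + t) := by
  simp [wPart, List.range_succ]

lemma wPart_len (n : ℕ) (hn : 3 ≤ n) (a t : ℕ) :
    (wPart n hn a t).length = ∑ i ∈ Finset.range t, (a + i) := by
  induction t with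
  | zero => simp [wPart]
  | succ t ih => rw [wPart_succ, List.length_append, ih, wBlk_len, Finset.sum_range_succ]

lemma wa_sumAP (a t : ℕ) : 2 * (∑ i ∈ Finset.range t, (a + i)) = t * (2 * a + t) - t := by
  induction t with
  | zero => simp
  | succ t ih =>
    rw [Finset.sum_range_succ]
    have hexp : (t+1) * (2*a + (t+1)) = t * (2*a + t) + (2*a + 2*t + 1) := by ring
    have hle : t ≤ t * (2*a + t) := by
      rcases Nat.eq_zero_or_pos t with h | h
      · simp [h]
      · calc t = t * 1 := by ring
          _ ≤ t * (2*a+t) := Nat.mul_le_mul_left t (by omega)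
    omega

section AuxWA

variable {n : ℕ} (δ : Fin n → Fin (n - 2) → Fin n)

lemma wa_ds_cons (q : Fin n) (a : Fin (n-2)) (w : List (Fin (n-2))) :
    deltaStar δ q (a :: w) = deltaStar δ (δ q a) w := rfl

lemma wa_ds_append (q : Fin n) (u v : List (Fin (n-2))) :
    deltaStar δ q (u ++ v) = deltaStar δ (deltaStar δ q u) v := List.foldl_append ..

variable (h1 : ∀ (q : Fin n) (ι : Fin (n - 2)), ι.val + 2 < q.val → δ q ι = q)
variable (h2 : ∀ (q : Fin n) (ι : Fin (n - 2)), q.val = ι.val + 2 → (δ q ι).val = q.val - 1)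
variable (h3 : ∀ (q : Fin n) (ι : Fin (n - 2)), 2 ≤ q.val → q.val < ι.val + 2 → (δ q ι).val = 0)
variable (h4 : ∀ (q : Fin n) (ι : Fin (n - 2)), q.val ≤ 1 → δ q ι = q)
include h1 h2 h3 h4

lemma wa_classify (q : Fin n) (ι : Fin (n-2)) :
    (δ q ι = q ∧ (q.val ≤ 1 ∨ ι.val + 2 < q.val)) ∨
    ((δ q ι).val = 0 ∧ 2 ≤ q.val ∧ q.val < ι.val + 2) ∨
    ((δ q ι).val + 1 = q.val ∧ q.val = ι.val + 2) := by
  rcases Nat.lt_or_ge q.val 2 with h | h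
  · exact Or.inl ⟨h4 q ι (by omega), Or.inl (by omega)⟩
  · rcases lt_trichotomy q.val (ι.val + 2) with h' | h' | h'
    · exact Or.inr (Or.inl ⟨h3 q ι h h', h, h'⟩)
    · exact Or.inr (Or.inr ⟨by have := h2 q ι h'; omega, h'⟩)
    · exact Or.inl ⟨h1 q ι h', Or.inr h'⟩

lemma wa_step_le (q : Fin n) (ι : Fin (n-2)) : (δ q ι).val ≤ q.val := by
  rcases wa_classify δ h1 h2 h3 h4 q ι with ⟨h, _⟩ | ⟨h, _⟩ | ⟨h, _⟩ <;> omega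

lemma wa_star_low (q : Fin n) (hq : q.val ≤ 1) (w : List (Fin (n-2))) :
    deltaStar δ q w = q := by
  induction w with
  | nil => rfl
  | cons a w ih => rw [wa_ds_cons, h4 q a hq]; exact ih

lemma wa_merge_low (q q' : Fin n) (ι : Fin (n-2)) (hne : q ≠ q') (he : δ q ι = δ q' ι) :
    (δ q ι).val ≤ 1 := by
  have hv : q.val ≠ q'.val := fun h => hne (Fin.val_injective h)
  have he' : (δ q ι).val = (δ q' ι).val := by rw [he]
  rcases wa_classify δ h1 h2 h3 h4 q ι with ⟨hq, hc⟩ | ⟨hq, hc⟩ | ⟨hq, hc⟩ <;>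
    rcases wa_classify δ h1 h2 h3 h4 q' ι with ⟨hq', hc'⟩ | ⟨hq', hc'⟩ | ⟨hq', hc'⟩ <;>
    omega

lemma wa_blk_run (hn : 3 ≤ n) (m : ℕ) (hm : m ≤ n - 2) (q : Fin n) (hq : q.val = m + 1) :
    deltaStar δ q (wBlk n hn m) = ⟨1, by omega⟩ := by
  induction m generalizing q with
  | zero => exact Fin.ext (by simpa [wBlk, deltaStar] using hq)
  | succ m ih =>
    rw [wBlk_succ, wa_ds_cons]
    have hι : (wLt n hn m).val = m := wLt_val n hn m (by omega)
    have hs := h2 q (wLt n hn m) (by omega)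
    exact ih (by omega) _ (by omega)

lemma wa_blk_fix (hn : 3 ≤ n) (m : ℕ) (hm : m ≤ n - 2) (q : Fin n) (hq : m + 2 ≤ q.val) :
    deltaStar δ q (wBlk n hn m) = q := by
  induction m with
  | zero => rfl
  | succ m ih =>
    rw [wBlk_succ, wa_ds_cons]
    have hι : (wLt n hn m).val = m := wLt_val n hn m (by omega)
    rw [h1 q (wLt n hn m) (by omega)]
    exact ih (by omega) (by omega)

lemma wa_part_fix (hn : 3 ≤ n) (a t : ℕ) (hat : a + t ≤ n - 2) (q : Fin n)
    (hq : a + t + 1 ≤ q.val) : deltaStar δ q (wPart n hn a t) = q := by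
  induction t with
  | zero => rfl
  | succ t ih =>
    rw [wPart_succ, wa_ds_append, ih (by omega) (by omega)]
    exact wa_blk_fix δ h1 h2 h3 h4 hn (a+t) (by omega) q (by omega)

lemma wa_run_all (hn : 3 ≤ n) (a t : ℕ) (hat : a + t ≤ n - 1) (q : Fin n)
    (hq : q.val = 1 ∨ (a + 1 ≤ q.val ∧ q.val ≤ a + t)) :
    deltaStar δ q (wPart n hn a t) = ⟨1, by omega⟩ := by
  induction t generalizing q with
  | zero =>
    have : q.val = 1 := by omega
    exact Fin.ext (by simpa [wPart, deltaStar] using this)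
  | succ t ih =>
    rw [wPart_succ, wa_ds_append]
    rcases Nat.lt_or_ge q.val (a + t + 1) with h | h
    · rw [ih (by omega) q (by omega)]
      exact wa_star_low δ h1 h2 h3 h4 _ (by simp) _
    · have hq' : q.val = a + t + 1 := by omega
      rw [wa_part_fix δ h1 h2 h3 h4 hn a t (by omega) q (by omega)]
      exact wa_blk_run δ h1 h2 h3 h4 hn (a+t) (by omega) q hq'

lemma wa_pot (w : List (Fin (n-2))) : ∀ (T : Finset (Fin n)),
    (∀ q ∈ T, ∀ p r, w = p ++ r → 1 ≤ (deltaStar δ q p).val) →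
    (∑ q ∈ T, (q.val - 1)) ≤
      (∑ q ∈ T.image (fun s => deltaStar δ s w), (q.val - 1)) + w.length := by
  induction w with
  | nil =>
    intro T hT
    simp [deltaStar, Finset.image_id']
  | cons a w ih =>
    intro T hT
    have hTa : ∀ q ∈ T, 1 ≤ (δ q a).val := fun q hq => by
      simpa [deltaStar] using hT q hq [a] w rfl
    set f : Fin n → Fin n := fun q => δ q a with hf
    have hmerge : ∀ q ∈ T, ∀ q' ∈ T, q ≠ q' → f q = f q' → ((f q).val - 1) = 0 := by
      intro q _ q' _ hne he
      have := wa_merge_low δ h1 h2 h3 h4 q q' a hne he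
      simp only [hf]
      omega
    have step1 : (∑ q ∈ T, (q.val - 1)) ≤ (∑ q ∈ T, ((f q).val - 1)) + 1 := by
      calc ∑ q ∈ T, (q.val - 1)
          ≤ ∑ q ∈ T, (((f q).val - 1) + if q.val = a.val + 2 then 1 else 0) := by
            apply Finset.sum_le_sum
            intro q hq
            have hle := hTa q hq
            rcases wa_classify δ h1 h2 h3 h4 q a with ⟨h, _⟩ | ⟨h, _⟩ | ⟨h, hcnd⟩
            · have hh : (f q).val = q.val := by rw [hf]; simp only []; rw [h]
              split <;> omega
            · simp only [hf] at *; omega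
            · rw [if_pos hcnd]; simp only [hf] at *; omega
        _ = (∑ q ∈ T, ((f q).val - 1)) + ∑ q ∈ T, (if q.val = a.val + 2 then 1 else 0) :=
            Finset.sum_add_distrib
        _ ≤ (∑ q ∈ T, ((f q).val - 1)) + 1 := by
            apply Nat.add_le_add_left
            have hcard : (∑ q ∈ T, (if q.val = a.val + 2 then 1 else 0)) =
                (T.filter fun q => q.val = a.val + 2).card := by
              rw [Finset.card_eq_sum_ones, Finset.sum_filter]
            rw [hcard]
            apply Finset.card_le_one.mpr
            intro x hx y hy
            exact Fin.val_injective
              (((Finset.mem_filter.mp hx).2).trans ((Finset.mem_filter.mp hy).2).symm)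
    have step2 : (∑ q ∈ T, ((f q).val - 1)) ≤ ∑ b ∈ T.image f, (b.val - 1) :=
      wa_sum_image_ge T f (fun b => b.val - 1) hmerge
    have hcond : ∀ q' ∈ T.image f, ∀ p r, w = p ++ r → 1 ≤ (deltaStar δ q' p).val := by
      intro q' hq' p r hw
      obtain ⟨q, hq, rfl⟩ := Finset.mem_image.mp hq'
      have := hT q hq (a :: p) r (by rw [hw]; rfl)
      rw [wa_ds_cons] at this
      exact this
    have step3 := ih (T.image f) hcond
    rw [Finset.image_image] at step3
    have hcomp : ((fun s => deltaStar δ s w) ∘ f) = fun s => deltaStar δ s (a :: w) := rfl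
    rw [hcomp] at step3
    simp only [List.length_cons]
    omega

end AuxWA

/-- The `n`-state weakly acyclic automaton on states `{-1, 0, 1, …, n-2}` (here the state
`q : Fin n` represents the value `j = q.val - 1`) over the alphabet `{a_1, …, a_{n-2}}`
(here the letter `ι : Fin (n-2)` represents `a_i` with `i = ι.val + 1`), with
`δ(j, a_i) = j` if `j > i`, `δ(j, a_i) = j - 1` if `j = i`, `δ(j, a_i) = -1` if `0 < j < i`
and `δ(j, a_i) = j` if `j ∈ {-1, 0}`, together with the set
`S = {0, n-2, n-3, …, n-k}`, satisfies: `S` is synchronizing and the shortest word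
synchronizing `S` has length `(k-1)(2n-k-2)/2`. -/
theorem stmt9 (n k : ℕ) (hn : 3 ≤ n) (hk2 : 2 ≤ k) (hkn : k ≤ n - 1)
    (δ : Fin n → Fin (n - 2) → Fin n)
    (h1 : ∀ (q : Fin n) (ι : Fin (n - 2)), ι.val + 2 < q.val → δ q ι = q)
    (h2 : ∀ (q : Fin n) (ι : Fin (n - 2)), q.val = ι.val + 2 → (δ q ι).val = q.val - 1)
    (h3 : ∀ (q : Fin n) (ι : Fin (n - 2)), 2 ≤ q.val → q.val < ι.val + 2 →
      (δ q ι).val = 0)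
    (h4 : ∀ (q : Fin n) (ι : Fin (n - 2)), q.val ≤ 1 → δ q ι = q)
    (S : Finset (Fin n)) (hS : S = Finset.univ.filter fun q => q.val = 1 ∨ n - k + 1 ≤ q.val) :
    WeaklyAcyclic δ ∧ IsSyncSet δ S ∧
      (∃ w, SyncsSet δ S w ∧ w.length = (k - 1) * (2 * n - k - 2) / 2) ∧
      (∀ w, SyncsSet δ S w → (k - 1) * (2 * n - k - 2) / 2 ≤ w.length) := by
  -- arithmetic preliminaries
  have hsum2 : 2 * (∑ i ∈ Finset.range (k-1), (n - k + i)) = (k-1) * (2*n - k - 2) := by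
    rw [wa_sumAP]
    have he : 2*(n-k) + (k-1) = (2*n-k-2) + 1 := by omega
    have he2 : (k-1) * ((2*n-k-2) + 1) = (k-1)*(2*n-k-2) + (k-1) := by ring
    rw [he]
    omega
  -- Part 1 : weakly acyclic
  have hWA : WeaklyAcyclic δ := by
    intro kk q hcyc
    obtain ⟨hkpos, hinj, x, hx⟩ := hcyc
    by_contra hne
    have hkk : 2 ≤ kk := by omega
    have hstep : ∀ t : ℕ,
        (q ⟨(t+1) % kk, Nat.mod_lt _ hkpos⟩).val ≤ (q ⟨t % kk, Nat.mod_lt _ hkpos⟩).val := by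
      intro t
      have hx' := hx ⟨t % kk, Nat.mod_lt _ hkpos⟩
      have hle := wa_step_le δ h1 h2 h3 h4 (q ⟨t % kk, Nat.mod_lt _ hkpos⟩)
        (x ⟨t % kk, Nat.mod_lt _ hkpos⟩)
      rw [hx'] at hle
      have hmod : (t % kk + 1) % kk = (t+1) % kk := Nat.mod_add_mod t kk 1
      have hfin : (⟨(t % kk + 1) % kk, Nat.mod_lt _ hkpos⟩ : Fin kk)
          = ⟨(t+1) % kk, Nat.mod_lt _ hkpos⟩ := Fin.ext hmod
      rwa [show (⟨(↑(⟨t % kk, Nat.mod_lt _ hkpos⟩ : Fin kk) + 1) % kk,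
          Nat.mod_lt _ (⟨t % kk, Nat.mod_lt _ hkpos⟩ : Fin kk).pos⟩ : Fin kk)
          = ⟨(t+1) % kk, Nat.mod_lt _ hkpos⟩ from Fin.ext hmod] at hle
    have hanti : ∀ s t : ℕ, s ≤ t →
        (q ⟨t % kk, Nat.mod_lt _ hkpos⟩).val ≤ (q ⟨s % kk, Nat.mod_lt _ hkpos⟩).val := by
      intro s t h
      induction t, h using Nat.le_induction with
      | base => exact le_refl _
      | succ t ht ih => exact (hstep t).trans ih
    have hkk0 : (q ⟨kk % kk, Nat.mod_lt _ hkpos⟩).val = (q ⟨0 % kk, Nat.mod_lt _ hkpos⟩).val := by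
      congr 2
      simp [Nat.mod_self]
    have h10 : (q ⟨1 % kk, Nat.mod_lt _ hkpos⟩).val = (q ⟨0 % kk, Nat.mod_lt _ hkpos⟩).val := by
      apply le_antisymm
      · have := hstep 0
        simpa using this
      · rw [← hkk0]
        exact hanti 1 kk (by omega)
    have hq10 : (⟨1 % kk, Nat.mod_lt _ hkpos⟩ : Fin kk) = ⟨0 % kk, Nat.mod_lt _ hkpos⟩ :=
      hinj (Fin.val_injective h10)
    rw [Fin.mk.injEq] at hq10
    rw [Nat.mod_eq_of_lt (show 1 < kk by omega), Nat.zero_mod] at hq10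
    exact one_ne_zero hq10
  -- Part 2 : the synchronizing word
  have hna : n - k + (k - 1) = n - 1 := by omega
  have hsync : SyncsSet δ S (wPart n hn (n-k) (k-1)) := by
    refine ⟨⟨1, by omega⟩, fun s hs => ?_⟩
    rw [hS, Finset.mem_filter] at hs
    apply wa_run_all δ h1 h2 h3 h4 hn (n-k) (k-1) (by omega)
    have := s.isLt
    rcases hs.2 with h | h
    · exact Or.inl h
    · exact Or.inr ⟨h, by omega⟩
  have hlen : (wPart n hn (n-k) (k-1)).length = (k - 1) * (2 * n - k - 2) / 2 := by
    rw [wPart_len]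
    omega
  -- Part 3 : lower bound
  have hlow : ∀ w, SyncsSet δ S w → (k - 1) * (2 * n - k - 2) / 2 ≤ w.length := by
    intro w hw
    obtain ⟨qf, hqf⟩ := hw
    have he1S : (⟨1, by omega⟩ : Fin n) ∈ S := by
      rw [hS, Finset.mem_filter]
      exact ⟨Finset.mem_univ _, Or.inl rfl⟩
    have hqf1 : qf = ⟨1, by omega⟩ := by
      have := hqf _ he1S
      rw [wa_star_low δ h1 h2 h3 h4 _ (by simp) w] at this
      exact this.symm
    have hfix : ∀ s ∈ S, deltaStar δ s w = ⟨1, by omega⟩ := by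
      intro s hs
      rw [hqf s hs, hqf1]
    have hnd : ∀ s ∈ S, ∀ p r, w = p ++ r → 1 ≤ (deltaStar δ s p).val := by
      intro s hs p r hpr
      by_contra hcon
      have h0 : (deltaStar δ s p).val = 0 := by omega
      have hfin := hfix s hs
      rw [hpr, wa_ds_append, wa_star_low δ h1 h2 h3 h4 _ (by omega) r] at hfin
      rw [hfin] at h0
      simp at h0
    have hpot := wa_pot δ h1 h2 h3 h4 w S hnd
    have himg : (∑ q ∈ S.image (fun s => deltaStar δ s w), (q.val - 1)) = 0 := by
      apply Finset.sum_eq_zero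
      intro q hq
      obtain ⟨s, hs, rfl⟩ := Finset.mem_image.mp hq
      rw [hfix s hs]
      rfl
    -- compute the potential of S
    have hSimg : S.image Fin.val = insert 1 (Finset.Ico (n-k+1) n) := by
      ext v
      simp only [Finset.mem_image, Finset.mem_insert, Finset.mem_Ico, hS, Finset.mem_filter,
        Finset.mem_univ, true_and]
      constructor
      · rintro ⟨s, hs, rfl⟩
        rcases hs with h | h
        · exact Or.inl h
        · exact Or.inr ⟨h, s.isLt⟩
      · rintro (rfl | ⟨hv1, hv2⟩)
        · exact ⟨⟨1, by omega⟩, Or.inl rfl, rfl⟩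
        · exact ⟨⟨v, hv2⟩, Or.inr hv1, rfl⟩
    have hphiS : (∑ q ∈ S, (q.val - 1)) = ∑ i ∈ Finset.range (k-1), (n - k + i) := by
      have hinjval : ∀ x ∈ S, ∀ y ∈ S, x.val = y.val → x = y :=
        fun x _ y _ h => Fin.val_injective h
      calc (∑ q ∈ S, (q.val - 1)) = ∑ v ∈ S.image Fin.val, (v - 1) :=
            (Finset.sum_image (f := fun v => v - 1) hinjval).symm
        _ = ∑ v ∈ insert 1 (Finset.Ico (n-k+1) n), (v-1) := by rw [hSimg]
        _ = ∑ v ∈ Finset.Ico (n-k+1) n, (v-1) := by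
            rw [Finset.sum_insert (by simp only [Finset.mem_Ico]; omega)]
            simp
        _ = ∑ i ∈ Finset.range (n - (n-k+1)), ((n-k+1+i) - 1) :=
            Finset.sum_Ico_eq_sum_range _ _ _
        _ = ∑ i ∈ Finset.range (k-1), (n - k + i) := by
            have hrr : n - (n-k+1) = k-1 := by omega
            rw [hrr]
            exact Finset.sum_congr rfl fun i _ => by omega
    rw [himg, hphiS] at hpot
    omega
  exact ⟨hWA, ⟨_, hsync⟩, ⟨_, hsync, hlen⟩, hlow⟩
end

section
/- Let A = (Q, {0,1}, δ) be a binary automaton with p states whose shortest synchronizing word has length ℓ with ℓ ≤ p. Then there exist a binary weakly acyclic automaton A' with p(p + 1) states and a subset S' of p states of A' such that S' is synchronizing in A' and the shortest word synchronizing S' in A' has length exactly ℓ. (A' consists of p + 1 layers of copies q_i^{(j)} of the states of A, with δ'(q_i^{(j)}, x) = q_k^{(j+1)} whenever δ(q_i, x) = q_k for 1 ≤ j ≤ p, the last layer consisting of sink states, and S' being the first layer.) -/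
def SyncsAll {Q A : Type*} (δ : Q → A → Q) (w : List A) : Prop :=
  ∃ q : Q, ∀ r : Q, deltaStar δ r w = q

theorem weaklyAcyclic_of_height {Q A : Type*} (δ : Q → A → Q) (f : Q → ℕ)
    (hf : ∀ q x, δ q x = q ∨ f q < f (δ q x)) : WeaklyAcyclic δ := by
  rintro k q ⟨hk, hinj, x, hx⟩
  by_contra hk1
  have : Nonempty (Fin k) := ⟨⟨0, hk⟩⟩
  -- a state of the cycle of maximal height can only be left by a loop, which would repeat a state
  obtain ⟨i, hi⟩ := Finite.exists_max fun i => f (q i)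
  rcases hf (q i) (x i) with hloop | hlt
  · have hnext : (i.val + 1) % k = i.val := congrArg Fin.val (hinj ((hx i).symm.trans hloop))
    rcases Nat.lt_or_ge (i.val + 1) k with hlt | hge
    · rw [Nat.mod_eq_of_lt hlt] at hnext
      omega
    · rw [show i.val + 1 = k by omega, Nat.mod_self] at hnext
      omega
  · rw [hx i] at hlt
    exact (hi _).not_gt hlt

section Transport

variable {Q R A : Type*} (δ : Q → A → Q) (e : Q ≃ R)

def transportAut (r : R) (x : A) : R := e (δ (e.symm r) x)

theorem deltaStar_transportAut (q : Q) (w : List A) :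
    deltaStar (transportAut δ e) (e q) w = e (deltaStar δ q w) := by
  induction w generalizing q with
  | nil => rfl
  | cons x w ih =>
    show deltaStar _ (e (δ (e.symm (e q)) x)) w = _
    rw [e.symm_apply_apply]
    exact ih _

theorem syncsAll_transportAut_iff (w : List A) :
    SyncsAll (transportAut δ e) w ↔ SyncsAll δ w := by
  constructor
  · rintro ⟨c, hc⟩
    exact ⟨e.symm c, fun r => e.injective (by rw [← deltaStar_transportAut, hc, e.apply_symm_apply])⟩
  · rintro ⟨c, hc⟩
    exact ⟨e c, fun r => by rw [← e.apply_symm_apply r, deltaStar_transportAut, hc]⟩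

end Transport

section Layered

variable {Q A : Type*} (δ : Q → A → Q) (n : ℕ)

def layered (s : Q × Fin (n + 1)) (x : A) : Q × Fin (n + 1) :=
  if h : s.2.val < n then (δ s.1 x, ⟨s.2.val + 1, by omega⟩) else s

theorem weaklyAcyclic_layered : WeaklyAcyclic (layered δ n) := by
  refine weaklyAcyclic_of_height _ (fun s => s.2.val) fun s x => ?_
  unfold layered
  split_ifs
  · exact Or.inr (Nat.lt_succ_self _)
  · exact Or.inl rfl

theorem deltaStar_layered (w : List A) (q : Q) (j : Fin (n + 1)) :
    deltaStar (layered δ n) (q, j) w =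
      (deltaStar δ q (w.take (n - j)), ⟨min (j + w.length) n, by omega⟩) := by
  induction w generalizing q j with
  | nil => simp [deltaStar, Fin.ext_iff]; omega
  | cons x w ih =>
    show deltaStar _ (layered δ n (q, j) x) w = _
    by_cases hj : j.val < n
    · rw [layered, dif_pos hj, ih, show n - j.val = n - (j.val + 1) + 1 by omega,
        List.take_succ_cons]
      simp only [Prod.mk.injEq, Fin.ext_iff, List.length_cons]
      exact ⟨rfl, by omega⟩
    · rw [layered, dif_neg hj, ih, show n - j.val = 0 by omega]
      simp only [Prod.mk.injEq, Fin.ext_iff, List.length_cons]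
      exact ⟨rfl, by omega⟩

def firstLayer (Q : Type*) [Fintype Q] (n : ℕ) : Finset (Q × Fin (n + 1)) :=
  Finset.univ.map (Function.Embedding.sectL Q 0)

theorem card_firstLayer [Fintype Q] : (firstLayer Q n).card = Fintype.card Q := by
  simp [firstLayer]

theorem syncsSet_firstLayer_iff [Fintype Q] (w : List A) :
    SyncsSet (layered δ n) (firstLayer Q n) w ↔ SyncsAll δ (w.take n) := by
  constructor
  · rintro ⟨c, hc⟩
    refine ⟨c.1, fun q => ?_⟩
    have hq := congrArg Prod.fst (hc (q, 0) (by simp [firstLayer]))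
    simpa [deltaStar_layered] using hq
  · rintro ⟨c, hc⟩
    refine ⟨(c, ⟨min w.length n, by omega⟩), fun s hs => ?_⟩
    obtain ⟨q, -, rfl⟩ := Finset.mem_map.1 hs
    simp [deltaStar_layered, hc]

end Layered

/-- From a binary `p`-state automaton whose shortest synchronizing word has length
`ℓ ≤ p`, one obtains a binary weakly acyclic automaton with `p(p+1)` states and a
synchronizing subset of `p` states whose shortest synchronizing word has length
exactly `ℓ`. -/
theorem stmt10 {Q : Type*} [Fintype Q] (δ : Q → Bool → Q) (p ℓ : ℕ)
    (hp : Fintype.card Q = p) (hℓp : ℓ ≤ p)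
    (hex : ∃ w : List Bool, w.length = ℓ ∧ ∃ q : Q, ∀ r : Q, deltaStar δ r w = q)
    (hmin : ∀ w : List Bool, (∃ q : Q, ∀ r : Q, deltaStar δ r w = q) → ℓ ≤ w.length) :
    ∃ (Q' : Type) (inst : Fintype Q') (δ' : Q' → Bool → Q') (S' : Finset Q'),
      @Fintype.card Q' inst = p * (p + 1) ∧ WeaklyAcyclic δ' ∧ S'.card = p ∧
      IsSyncSet δ' S' ∧
      (∃ w : List Bool, SyncsSet δ' S' w ∧ w.length = ℓ) ∧
      (∀ w : List Bool, SyncsSet δ' S' w → ℓ ≤ w.length) := by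
  obtain ⟨w₀, hw₀, hsync₀⟩ := hex
  -- `Q'` must live in `Type`, so the construction is carried out on a copy of `δ` over `Fin p`
  let e : Q ≃ Fin p := Fintype.equivFinOfCardEq hp
  have hsyncs : ∀ w, SyncsSet (layered (transportAut δ e) p) (firstLayer (Fin p) p) w ↔
      SyncsAll δ (w.take p) := fun w =>
    (syncsSet_firstLayer_iff _ p w).trans (syncsAll_transportAut_iff δ e _)
  have hw₀syncs : SyncsSet (layered (transportAut δ e) p) (firstLayer (Fin p) p) w₀ := by
    rwa [hsyncs, List.take_of_length_le (by omega)]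
  refine ⟨Fin p × Fin (p + 1), inferInstance, layered (transportAut δ e) p,
    firstLayer (Fin p) p, by simp, weaklyAcyclic_layered _ p, by simp [card_firstLayer],
    ⟨w₀, hw₀syncs⟩, ⟨w₀, hw₀syncs, hw₀⟩, fun w hw => ?_⟩
  calc ℓ ≤ (w.take p).length := hmin _ ((hsyncs w).1 hw)
    _ ≤ w.length := List.length_take_le' _ _
end

section
/- Let A = (Q, Σ, δ) be an automaton with n states over a nonempty alphabet Σ and let S ⊆ Q be a nonempty subset. Construct the automaton A' over Σ by taking a copy of A and, for each state s ∈ S, adding n + 1 new states all of whose transitions (for every letter) map to s. Then A' has a synchronizing set of states of size at least (n + 1)|S| if and only if S is a synchronizing set in A. -/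
lemma deltaStar_inl {Q A : Type*} {S : Finset Q} {n : ℕ}
    (δ : Q → A → Q) (δ' : (Q ⊕ (↑S × Fin (n + 1))) → A → (Q ⊕ (↑S × Fin (n + 1))))
    (hδ'1 : ∀ (q : Q) (x : A), δ' (Sum.inl q) x = Sum.inl (δ q x)) :
    ∀ (w : List A) (p : Q), deltaStar δ' (Sum.inl p) w = Sum.inl (deltaStar δ p w) := by
  intro w
  induction w with
  | nil => intro p; rfl
  | cons a t ih =>
    intro p
    simp only [deltaStar, List.foldl_cons, hδ'1]
    exact ih (δ p a)

/-- Let `A` be an `n`-state automaton and `S` a nonempty subset of its states. Let `A'`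
be obtained from `A` by adding, for each `s ∈ S`, `n + 1` new states all of whose
transitions map to `s`. Then `A'` has a synchronizing set of size at least `(n+1)|S|`
iff `S` is synchronizing in `A`. -/
theorem stmt11 {Q A : Type*} [Fintype Q] [Fintype A] [Nonempty A] (δ : Q → A → Q)
    (n : ℕ) (hn : Fintype.card Q = n) (S : Finset Q) (hS : S.Nonempty)
    (δ' : (Q ⊕ (↥S × Fin (n + 1))) → A → (Q ⊕ (↥S × Fin (n + 1))))
    (hδ'1 : ∀ (q : Q) (x : A), δ' (Sum.inl q) x = Sum.inl (δ q x))
    (hδ'2 : ∀ (s : ↥S) (i : Fin (n + 1)) (x : A),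
      δ' (Sum.inr (s, i)) x = Sum.inl s.val) :
    (∃ T : Finset (Q ⊕ (↥S × Fin (n + 1))),
        IsSyncSet δ' T ∧ (n + 1) * S.card ≤ T.card) ↔ IsSyncSet δ S := by
  classical
  have hinl := deltaStar_inl (S := S) (n := n) δ δ' hδ'1
  have hcardQS : Fintype.card (Q ⊕ (↑S × Fin (n + 1))) = n + S.card * (n + 1) := by
    simp [Fintype.card_sum, Fintype.card_prod, Fintype.card_coe, hn]
  have hn1 : 1 ≤ n := by
    obtain ⟨s, hs⟩ := hS
    have : 0 < Fintype.card Q := Fintype.card_pos_iff.mpr ⟨s⟩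
    omega
  have hS1 : 1 ≤ S.card := Finset.card_pos.mpr hS
  constructor
  · rintro ⟨T, ⟨w, q, hq⟩, hcard⟩
    have hcopy : ∀ s : ↑S, ∃ i : Fin (n + 1), Sum.inr (s, i) ∈ T := by
      intro s
      by_contra h
      push_neg at h
      have hsub : T ⊆ Finset.univ \ (Finset.univ.image
          fun i : Fin (n + 1) => (Sum.inr (s, i) : Q ⊕ (↑S × Fin (n + 1)))) := by
        intro t ht
        simp only [Finset.mem_sdiff, Finset.mem_univ, true_and, Finset.mem_image]
        rintro ⟨i, -, rfl⟩
        exact h i ht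
      have himg : (Finset.univ.image
          fun i : Fin (n + 1) => (Sum.inr (s, i) : Q ⊕ (↑S × Fin (n + 1)))).card = n + 1 := by
        rw [Finset.card_image_of_injective _ (fun i j hij => by
          simpa using hij)]
        simp
      have h1 := Finset.card_le_card hsub
      rw [Finset.card_sdiff_of_subset (Finset.subset_univ _), himg, Finset.card_univ, hcardQS] at h1
      rw [mul_comm] at hcard
      have hk : n + 1 ≤ S.card * (n + 1) := Nat.le_mul_of_pos_left _ hS1
      generalize S.card * (n + 1) = k at hcard h1 hk
      omega
    cases w with
    | nil =>
      have hT1 : T ⊆ {q} := by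
        intro t ht
        simpa [deltaStar] using hq t ht
      have := Finset.card_le_card hT1
      simp only [Finset.card_singleton] at this
      nlinarith [hcard, hn1, hS1]
    | cons a t =>
      refine ⟨t, deltaStar δ (hS.choose) t, ?_⟩
      intro s hs
      obtain ⟨i0, hi0⟩ := hcopy ⟨hS.choose, hS.choose_spec⟩
      obtain ⟨i, hi⟩ := hcopy ⟨s, hs⟩
      have h1 := hq _ hi
      have h2 := hq _ hi0
      simp only [deltaStar, List.foldl_cons, hδ'2] at h1 h2
      rw [show ∀ (p : Q) (u : List A), List.foldl δ' (Sum.inl p) u = Sum.inl (List.foldl δ p u)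
        from fun p u => hinl u p] at h1 h2
      have := h1.trans h2.symm
      exact Sum.inl_injective this
  · rintro ⟨w, q0, hq0⟩
    refine ⟨Finset.univ.image (fun p : ↑S × Fin (n + 1) => (Sum.inr p : Q ⊕ (↑S × Fin (n + 1)))),
      ⟨(Classical.arbitrary A) :: w, Sum.inl q0, ?_⟩, ?_⟩
    · intro t ht
      simp only [Finset.mem_image, Finset.mem_univ, true_and] at ht
      obtain ⟨⟨s, i⟩, rfl⟩ := ht
      simp only [deltaStar, List.foldl_cons, hδ'2]
      rw [show List.foldl δ' (Sum.inl (s : Q)) w = Sum.inl (List.foldl δ (s : Q) w)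
        from hinl w s]
      exact congrArg Sum.inl (hq0 s s.2)
    · rw [Finset.card_image_of_injective _ Sum.inr_injective, Finset.card_univ,
        Fintype.card_prod, Fintype.card_coe, Fintype.card_fin, mul_comm]
end

section
/- For every finite simple graph G with p vertices, there exists a weakly acyclic automaton A with 2p + 1 states over an alphabet of p letters such that the maximum size of a synchronizing set of states of A equals α(G) + 1. (A has states s_i, t_i for each vertex v_i and an extra state f; the letter corresponding to v_i maps s_i to f, maps s_j to t_j for every neighbor v_j of v_i, and fixes all other states.) -/
/-- The independence number of a graph: the maximum size of a set of vertices
no two of which are adjacent. -/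
noncomputable def graphIndepNum {V : Type*} [Fintype V] (G : SimpleGraph V) : ℕ :=
  sSup {k | ∃ s : Finset V, (∀ a ∈ s, ∀ b ∈ s, ¬ G.Adj a b) ∧ s.card = k}

section Aux

variable {V : Type*} {p : ℕ} (G : SimpleGraph V) (e : V ≃ Fin p)

open Classical in
/-- The transition function of the automaton built from `G`. States: `inl a` is `s_a`,
`inr (inl a)` is `t_a`, `inr (inr ())` is `f`. -/
noncomputable def dlt : (Fin p ⊕ (Fin p ⊕ Unit)) → V → (Fin p ⊕ (Fin p ⊕ Unit))
  | Sum.inl a, x =>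
      if e x = a then Sum.inr (Sum.inr ())
      else if G.Adj x (e.symm a) then Sum.inr (Sum.inl a) else Sum.inl a
  | q, _ => q

theorem deltaStar_cons {Q A : Type*} (δ : Q → A → Q) (q : Q) (x : A) (w : List A) :
    deltaStar δ q (x :: w) = deltaStar δ (δ q x) w := rfl

theorem deltaStar_sink {Q A : Type*} {δ : Q → A → Q} {q : Q} (h : IsSink δ q) :
    ∀ w : List A, deltaStar δ q w = q
  | [] => rfl
  | x :: w => by rw [deltaStar_cons, h x]; exact deltaStar_sink h w

theorem dlt_inr_sink (r : Fin p ⊕ Unit) : IsSink (dlt G e) (Sum.inr r) := fun _ => rfl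

open Classical in
theorem dlt_inl (a : Fin p) (x : V) :
    dlt G e (Sum.inl a) x =
      if e x = a then Sum.inr (Sum.inr ())
      else if G.Adj x (e.symm a) then Sum.inr (Sum.inl a) else Sum.inl a := by
  simp [dlt]

theorem dlt_reach (a : Fin p) : ∀ w : List V,
    deltaStar (dlt G e) (Sum.inl a) w = Sum.inl a ∨
    deltaStar (dlt G e) (Sum.inl a) w = Sum.inr (Sum.inl a) ∨
    deltaStar (dlt G e) (Sum.inl a) w = Sum.inr (Sum.inr ())
  | [] => Or.inl rfl
  | x :: w => by
    rw [deltaStar_cons, dlt_inl]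
    by_cases h1 : e x = a
    · rw [if_pos h1, deltaStar_sink (dlt_inr_sink G e _)]; exact Or.inr (Or.inr rfl)
    · rw [if_neg h1]
      by_cases h2 : G.Adj x (e.symm a)
      · rw [if_pos h2, deltaStar_sink (dlt_inr_sink G e _)]; exact Or.inr (Or.inl rfl)
      · rw [if_neg h2]; exact dlt_reach a w

theorem dlt_to_f (a : Fin p) : ∀ w : List V,
    deltaStar (dlt G e) (Sum.inl a) w = Sum.inr (Sum.inr ()) →
    ∃ u v, w = u ++ (e.symm a) :: v ∧ ∀ y ∈ u, ¬ G.Adj y (e.symm a)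
  | [], h => by simp [deltaStar] at h
  | x :: w, h => by
    rw [deltaStar_cons, dlt_inl] at h
    by_cases h1 : e x = a
    · refine ⟨[], w, ?_, by simp⟩
      have : x = e.symm a := by rw [← h1, Equiv.symm_apply_apply]
      simp [this]
    · rw [if_neg h1] at h
      by_cases h2 : G.Adj x (e.symm a)
      · rw [if_pos h2, deltaStar_sink (dlt_inr_sink G e _)] at h
        exact absurd h (by simp)
      · rw [if_neg h2] at h
        obtain ⟨u, v, huv, hu⟩ := dlt_to_f a w h
        exact ⟨x :: u, v, by rw [huv]; rfl, by
          intro y hy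
          rcases List.mem_cons.mp hy with rfl | hy
          · exact h2
          · exact hu y hy⟩

theorem dlt_indep_to_f (v : V) : ∀ w : List V, v ∈ w → (∀ y ∈ w, ¬ G.Adj y v) →
    deltaStar (dlt G e) (Sum.inl (e v)) w = Sum.inr (Sum.inr ())
  | [], hv, _ => by simp at hv
  | x :: w, hv, hw => by
    rw [deltaStar_cons, dlt_inl]
    by_cases h1 : e x = e v
    · rw [if_pos h1]; exact deltaStar_sink (dlt_inr_sink G e _) w
    · rw [if_neg h1, Equiv.symm_apply_apply,
        if_neg (hw x List.mem_cons_self)]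
      have hxv : x ≠ v := fun hh => h1 (by rw [hh])
      exact dlt_indep_to_f v w (by rcases List.mem_cons.mp hv with rfl | h
                                   · exact absurd rfl hxv
                                   · exact h)
        (fun y hy => hw y (List.mem_cons_of_mem _ hy))

theorem list_split {A : Type*} {i j : A} : ∀ {u1 : List A} {v1 : List A} {u2 v2 : List A},
    u1 ++ i :: v1 = u2 ++ j :: v2 → i ∈ u2 ∨ j ∈ u1 ∨ i = j
  | [], v1, u2, v2, h => by
    cases u2 with
    | nil => simp at h; exact Or.inr (Or.inr h.1)
    | cons c u2' => simp at h; exact Or.inl (by simp [h.1])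
  | c :: u1', v1, u2, v2, h => by
    cases u2 with
    | nil => simp at h; exact Or.inr (Or.inl (by simp [h.1]))
    | cons c2 u2' =>
      simp at h
      rcases list_split h.2 with h' | h' | h'
      · exact Or.inl (List.mem_cons_of_mem _ h')
      · exact Or.inr (Or.inl (List.mem_cons_of_mem _ h'))
      · exact Or.inr (Or.inr h')

/-- measure: s-states have value 0, t-states and f have value 1. -/
def msr : (Fin p ⊕ (Fin p ⊕ Unit)) → ℕ
  | Sum.inl _ => 0
  | Sum.inr _ => 1

theorem msr_le_one (q : Fin p ⊕ (Fin p ⊕ Unit)) : msr q ≤ 1 := by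
  cases q <;> simp [msr]

theorem dlt_step (s : Fin p ⊕ (Fin p ⊕ Unit)) (y : V) :
    dlt G e s y = s ∨ msr (dlt G e s y) = msr s + 1 := by
  cases s with
  | inr r => exact Or.inl rfl
  | inl a =>
    rw [dlt_inl]
    by_cases h1 : e y = a
    · rw [if_pos h1]; exact Or.inr rfl
    · rw [if_neg h1]
      by_cases h2 : G.Adj y (e.symm a)
      · rw [if_pos h2]; exact Or.inr rfl
      · rw [if_neg h2]; exact Or.inl rfl

theorem dlt_weaklyAcyclic : WeaklyAcyclic (dlt G e) := by
  intro k q hcyc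
  obtain ⟨hk, hinj, x, hx⟩ := hcyc
  by_contra hne
  have hk2 : 2 ≤ k := by omega
  have strict : ∀ i : Fin k, (i.val + 1) % k ≠ i.val →
      msr (q ⟨(i.val + 1) % k, Nat.mod_lt _ i.pos⟩) = msr (q i) + 1 := by
    intro i hne'
    rcases dlt_step G e (q i) (x i) with h | h
    · rw [hx i] at h
      exact absurd (congrArg Fin.val (hinj h)) hne'
    · rw [hx i] at h; exact h
  have h0 : (0:ℕ) < k := by omega
  have h1 : (1:ℕ) < k := by omega
  have e01 : msr (q ⟨1, h1⟩) = msr (q ⟨0, h0⟩) + 1 := by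
    have := strict ⟨0, h0⟩ (by simp [Nat.mod_eq_of_lt h1])
    simpa [Nat.mod_eq_of_lt h1] using this
  rcases Nat.lt_or_ge k 3 with hk3 | hk3
  · have hkk : k = 2 := by omega
    subst hkk
    have e10 : msr (q ⟨0, h0⟩) = msr (q ⟨1, h1⟩) + 1 := by
      have := strict ⟨1, h1⟩ (by norm_num)
      simpa using this
    omega
  · have h2 : (2:ℕ) < k := by omega
    have e12 : msr (q ⟨2, h2⟩) = msr (q ⟨1, h1⟩) + 1 := by
      have := strict ⟨1, h1⟩ (by simp [Nat.mod_eq_of_lt h2])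
      simpa [Nat.mod_eq_of_lt h2] using this
    have := msr_le_one (q ⟨2, h2⟩)
    omega

end Aux

section Aux4
variable {V : Type*} [Fintype V] (G : SimpleGraph V)

theorem indep_bdd : BddAbove {k | ∃ s : Finset V, (∀ a ∈ s, ∀ b ∈ s, ¬ G.Adj a b) ∧ s.card = k} :=
  ⟨Fintype.card V, fun _ ⟨s, _, hc⟩ => hc ▸ s.card_le_univ⟩

theorem indep_le (s : Finset V) (hs : ∀ a ∈ s, ∀ b ∈ s, ¬ G.Adj a b) :
    s.card ≤ graphIndepNum G := le_csSup (indep_bdd G) ⟨s, hs, rfl⟩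

theorem indep_exists : ∃ s : Finset V, (∀ a ∈ s, ∀ b ∈ s, ¬ G.Adj a b) ∧ s.card = graphIndepNum G := by
  have h0 : (0:ℕ) ∈ {k | ∃ s : Finset V, (∀ a ∈ s, ∀ b ∈ s, ¬ G.Adj a b) ∧ s.card = k} :=
    ⟨∅, by simp, rfl⟩
  exact Nat.sSup_mem ⟨0, h0⟩ (indep_bdd G)

end Aux4


/-- For every graph `G` with `p` vertices there is a weakly acyclic automaton with
`2p + 1` states over an alphabet of `p` letters (the vertices of `G`) whose maximum
synchronizing set has size exactly `α(G) + 1`. -/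
theorem stmt12 {V : Type*} [Fintype V] (G : SimpleGraph V) (p : ℕ)
    (hp : Fintype.card V = p) :
    ∃ (Q : Type) (inst : Fintype Q) (δ : Q → V → Q),
      @Fintype.card Q inst = 2 * p + 1 ∧ WeaklyAcyclic δ ∧
      IsGreatest {k | ∃ T : Finset Q, IsSyncSet δ T ∧ T.card = k}
        (graphIndepNum G + 1) := by
  classical
  have e : V ≃ Fin p := Fintype.equivFinOfCardEq hp
  refine ⟨Fin p ⊕ (Fin p ⊕ Unit), inferInstance, dlt G e, ?_, dlt_weaklyAcyclic G e, ?_, ?_⟩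
  · simp only [Fintype.card_sum, Fintype.card_fin, Fintype.card_unit]; omega
  · -- membership : a synchronizing set of size α+1
    obtain ⟨s, hs, hcard⟩ := indep_exists G
    refine ⟨(s.image fun v => Sum.inl (e v)) ∪ {Sum.inr (Sum.inr ())}, ⟨s.toList, Sum.inr (Sum.inr ()), ?_⟩, ?_⟩
    · intro r hr
      rcases Finset.mem_union.mp hr with hr | hr
      · obtain ⟨v, hv, rfl⟩ := Finset.mem_image.mp hr
        exact dlt_indep_to_f G e v s.toList (Finset.mem_toList.mpr hv)
          (fun y hy => hs y (Finset.mem_toList.mp hy) v hv)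
      · rw [Finset.mem_singleton.mp hr]
        exact deltaStar_sink (dlt_inr_sink G e _) _
    · have hinj : Function.Injective (fun v : V => (Sum.inl (e v) : Fin p ⊕ (Fin p ⊕ Unit))) :=
        fun v₁ v₂ h => e.injective (Sum.inl.inj h)
      have hdisj : Disjoint (s.image fun v => (Sum.inl (e v) : Fin p ⊕ (Fin p ⊕ Unit)))
          {Sum.inr (Sum.inr ())} := by
        simp [Finset.disjoint_left]
      rw [Finset.card_union_of_disjoint hdisj, Finset.card_image_of_injective _ hinj,
        Finset.card_singleton, hcard]
  · -- upper bound
    rintro k ⟨T, ⟨w, q0, hq0⟩, rfl⟩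
    by_cases hB : ∃ b : Fin p, Sum.inr (Sum.inl b) ∈ T
    · obtain ⟨b, hb⟩ := hB
      have hq0b : q0 = Sum.inr (Sum.inl b) := by
        have := hq0 _ hb
        rw [deltaStar_sink (dlt_inr_sink G e _)] at this
        exact this.symm
      subst hq0b
      have hsub : T ⊆ {Sum.inl b, Sum.inr (Sum.inl b)} := by
        intro r hr
        have hrw := hq0 r hr
        match r with
        | Sum.inl a =>
          rcases dlt_reach G e a w with h | h | h <;> rw [hrw] at h
          · exact absurd h (by simp)
          · simp at h
            simp [h]
          · exact absurd h (by simp)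
        | Sum.inr (Sum.inl c) =>
          have hc := deltaStar_sink (dlt_inr_sink G e (Sum.inl c)) w
          rw [hrw] at hc
          simp at hc
          simp [hc]
        | Sum.inr (Sum.inr ()) =>
          have hc := deltaStar_sink (dlt_inr_sink G e (Sum.inr ())) w
          rw [hrw] at hc
          exact absurd hc (by simp)
      have hT2 : T.card ≤ 2 := by
        refine le_trans (Finset.card_le_card hsub) ?_
        exact le_trans (Finset.card_insert_le _ _) (by simp)
      have hα : 1 ≤ graphIndepNum G := by
        have := indep_le G {e.symm b} (by simp)
        simpa using this
      omega
    · push_neg at hB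
      set S : Finset (Fin p) := Finset.univ.filter (fun a => Sum.inl a ∈ T) with hS
      have hsub : T ⊆ S.image Sum.inl ∪ {Sum.inr (Sum.inr ())} := by
        intro r hr
        match r with
        | Sum.inl a =>
          exact Finset.mem_union_left _ (Finset.mem_image.mpr
            ⟨a, Finset.mem_filter.mpr ⟨Finset.mem_univ a, hr⟩, rfl⟩)
        | Sum.inr (Sum.inl c) => exact absurd hr (hB c)
        | Sum.inr (Sum.inr ()) => exact Finset.mem_union_right _ (by simp)
      have hSindep : ∀ a ∈ S, ∀ b ∈ S, ¬ G.Adj (e.symm a) (e.symm b) := by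
        intro a ha b hb hadj
        have hab : a ≠ b := by
          intro hh; subst hh; exact G.irrefl hadj
        have haT : Sum.inl a ∈ T := (Finset.mem_filter.mp ha).2
        have hbT : Sum.inl b ∈ T := (Finset.mem_filter.mp hb).2
        have h1 := hq0 _ haT
        have h2 := hq0 _ hbT
        have key : deltaStar (dlt G e) (Sum.inl a) w = Sum.inr (Sum.inr ()) ∧
            deltaStar (dlt G e) (Sum.inl b) w = Sum.inr (Sum.inr ()) := by
          rcases dlt_reach G e a w with ha' | ha' | ha' <;>
            rcases dlt_reach G e b w with hb' | hb' | hb' <;>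
            rw [h1] at ha' <;> rw [h2] at hb' <;>
            first
              | exact ⟨h1.trans ha', h2.trans hb'⟩
              | simp_all
        obtain ⟨hfa, hfb⟩ := key
        obtain ⟨u1, v1, hw1, hu1⟩ := dlt_to_f G e a w hfa
        obtain ⟨u2, v2, hw2, hu2⟩ := dlt_to_f G e b w hfb
        rcases list_split (hw1.symm.trans hw2) with h | h | h
        · exact hu2 _ h hadj
        · exact hu1 _ h hadj.symm
        · exact hab (e.symm.injective h)
      have hScard : S.card ≤ graphIndepNum G := by
        have := indep_le G (S.image fun a => e.symm a) (by
          intro a' ha' b' hb'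
          obtain ⟨a, ha, rfl⟩ := Finset.mem_image.mp ha'
          obtain ⟨b, hb, rfl⟩ := Finset.mem_image.mp hb'
          exact hSindep a ha b hb)
        rwa [Finset.card_image_of_injective _ e.symm.injective] at this
      calc T.card ≤ (S.image Sum.inl ∪ {Sum.inr (Sum.inr ())}).card := Finset.card_le_card hsub
        _ ≤ (S.image Sum.inl).card + 1 := by
              refine le_trans (Finset.card_union_le _ _) ?_
              simp only [Finset.card_singleton]
              exact le_rfl
        _ ≤ S.card + 1 := by
              have := Finset.card_image_le (s := S) (f := (Sum.inl : Fin p → Fin p ⊕ (Fin p ⊕ Unit)))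
              omega
        _ ≤ graphIndepNum G + 1 := by omega
end
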